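/- arXiv:1009.3260 — 13 statements merged into one kernel-verified Lean document; each statement's English description precedes it below -/
import Mathlib

section
/- Let B be a topological space, let X and Y be fibrewise compact, fibrewise Hausdorff spaces over B, and let Z be any fibrewise space over B. If φ : X → Y is a continuous surjection commuting with the projections, then a (not necessarily continuous) function ψ : Y → Z commuting with the projections is continuous if and only if the composite ψ∘φ : X → Z is continuous. -/
/-!
The map `φ` is proper: an ultrafilter on `X` whose image under `φ` converges to `y`
has image under `pX = pY ∘ φ` converging to `pY y`, hence (properness of `pX`) converges to some
`x` over `pY y`; then `φ x` and `y` are both limits of the same ultrafilter in one fibre of `Y`,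
so they coincide by fibrewise Hausdorffness. A closed continuous surjection is a quotient map,
and a map out of the target of a quotient map is continuous iff its composite is.
-/

/-- `X` (with projection `p : X → B`) is fibrewise compact over `B`:
the projection is a closed map and every fibre is compact. -/
def FibrewiseCompact {X B : Type} [TopologicalSpace X] [TopologicalSpace B]
    (p : X → B) : Prop :=
  IsClosedMap p ∧ ∀ b : B, IsCompact (p ⁻¹' {b})

/-- `X` (with projection `p : X → B`) is fibrewise Hausdorff over `B`:
any two distinct points in the same fibre have disjoint open neighbourhoods. -/
def FibrewiseT2 {X B : Type} [TopologicalSpace X] [TopologicalSpace B]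
    (p : X → B) : Prop :=
  ∀ x y : X, x ≠ y → p x = p y →
    ∃ u v : Set X, IsOpen u ∧ IsOpen v ∧ x ∈ u ∧ y ∈ v ∧ Disjoint u v

open Filter Topology

theorem FibrewiseCompact.isProperMap {X B : Type} [TopologicalSpace X] [TopologicalSpace B]
    {p : X → B} (hp : FibrewiseCompact p) (hcont : Continuous p) : IsProperMap p :=
  isProperMap_iff_isClosedMap_and_compact_fibers.mpr ⟨hcont, hp⟩

theorem FibrewiseT2.isSeparatedMap {X B : Type} [TopologicalSpace X] [TopologicalSpace B]
    {p : X → B} (hp : FibrewiseT2 p) : IsSeparatedMap p :=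
  fun x₁ x₂ he hne ↦ hp x₁ x₂ hne he

theorem IsSeparatedMap.eq_of_tendsto {α X Y : Type*} [TopologicalSpace X] {f : X → Y}
    (sep : IsSeparatedMap f) {l : Filter α} [l.NeBot] {u : α → X} {x₁ x₂ : X}
    (h₁ : Tendsto u l (𝓝 x₁)) (h₂ : Tendsto u l (𝓝 x₂)) (he : f x₁ = f x₂) : x₁ = x₂ := by
  by_contra hne
  exact (map_neBot (m := u)).ne
    (disjoint_self.mp <| (isSeparatedMap_iff_disjoint_nhds.mp sep x₁ x₂ he hne).mono h₁ h₂)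

theorem IsProperMap.of_comp_of_isSeparatedMap {X Y Z : Type*} [TopologicalSpace X]
    [TopologicalSpace Y] [TopologicalSpace Z] {f : X → Y} {g : Y → Z}
    (hf : Continuous f) (hg : Continuous g) (sep : IsSeparatedMap g)
    (h : IsProperMap (g ∘ f)) : IsProperMap f := by
  refine isProperMap_iff_ultrafilter.mpr ⟨hf, fun 𝒰 y hy ↦ ?_⟩
  obtain ⟨x, hx, h𝒰x⟩ := h.ultrafilter_le_nhds_of_tendsto ((hg.tendsto y).comp hy)
  exact ⟨x, sep.eq_of_tendsto ((hf.tendsto x).mono_left h𝒰x) hy hx, h𝒰x⟩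

theorem continuous_iff_comp_fibrewise_surjection_general
    {B X Y Z : Type} [TopologicalSpace B] [TopologicalSpace X] [TopologicalSpace Y]
    [TopologicalSpace Z]
    (pX : X → B) (pY : Y → B)
    (hpX : Continuous pX) (hpY : Continuous pY)
    (hXc : FibrewiseCompact pX)
    (hYh : FibrewiseT2 pY)
    (φ : X → Y) (hφc : Continuous φ) (hφs : Function.Surjective φ)
    (hφcomm : ∀ x, pY (φ x) = pX x)
    (ψ : Y → Z) :
    Continuous ψ ↔ Continuous (ψ ∘ φ) := by
  have hpX_eq : pY ∘ φ = pX := funext hφcomm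
  have hφ : IsProperMap φ :=
    .of_comp_of_isSeparatedMap hφc hpY hYh.isSeparatedMap (hpX_eq ▸ hXc.isProperMap hpX)
  exact (hφ.isClosedMap.isQuotientMap hφc hφs).continuous_iff

/-- Let `φ : X → Y` be a continuous fibrewise surjection between fibrewise compact,
fibrewise Hausdorff spaces over `B`, and `ψ : Y → Z` a (not necessarily continuous)
function commuting with the projections, `Z` any fibrewise space over `B`.
Then `ψ` is continuous iff `ψ ∘ φ` is continuous. -/
theorem continuous_iff_comp_fibrewise_surjection
    {B X Y Z : Type} [TopologicalSpace B] [TopologicalSpace X] [TopologicalSpace Y]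
    [TopologicalSpace Z]
    (pX : X → B) (pY : Y → B) (pZ : Z → B)
    (hpX : Continuous pX) (hpY : Continuous pY) (hpZ : Continuous pZ)
    (hXc : FibrewiseCompact pX) (hXh : FibrewiseT2 pX)
    (hYc : FibrewiseCompact pY) (hYh : FibrewiseT2 pY)
    (φ : X → Y) (hφc : Continuous φ) (hφs : Function.Surjective φ)
    (hφcomm : ∀ x, pY (φ x) = pX x)
    (ψ : Y → Z) (hψcomm : ∀ y, pZ (ψ y) = pY y) :
    Continuous ψ ↔ Continuous (ψ ∘ φ) :=
  continuous_iff_comp_fibrewise_surjection_general pX pY hpX hpY hXc hYh φ hφc hφs hφcomm ψ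
end

section
/- Let B be a topological space and suppose given fibrewise compact, fibrewise Hausdorff spaces X, Y, Z, W over B and fibrewise maps i : X → Y, j : X → Z, u : Y → W, v : Z → W with u∘i = v∘j. Suppose that for every b ∈ B the induced square of fibres X_b → Y_b, X_b → Z_b, Y_b → W_b, Z_b → W_b (fibres carrying the subspace topologies) is a pushout square of topological spaces. Then the original square is a pushout of topological spaces, i.e. the canonical continuous map from the topological pushout Y ⊔_X Z to W is a homeomorphism; moreover, for any fibrewise space V over B, a function W → V commuting with the projections is continuous if and only if its composites with u and with v are both continuous. -/
open Topology Function

section Fibrewise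

variable {B Y W : Type} [TopologicalSpace B] [TopologicalSpace Y] [TopologicalSpace W]

lemma FibrewiseT2.isSeparatedMap_s2 {p : W → B} (h : FibrewiseT2 p) : IsSeparatedMap p :=
  fun x y hxy hne => h x y hne hxy

lemma FibrewiseT2.disjoint_nhdsSet_nhds {p : W → B} (h : FibrewiseT2 p) {K : Set W}
    (hK : IsCompact K) {w : W} (hKw : K ⊆ p ⁻¹' {p w}) (hw : w ∉ K) :
    Disjoint (𝓝ˢ K) (𝓝 w) :=
  hK.disjoint_nhdsSet_left.2 fun k hk =>
    isSeparatedMap_iff_disjoint_nhds.1 h.isSeparatedMap_s2 k w (hKw hk) (ne_of_mem_of_not_mem hk hw)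

/-- Given `w ∉ f '' A`, separate `w` from the compact set `f '' (A ∩ pY⁻¹{pW w})` by an open `U`;
since `pY` is closed, the points of `A` over some neighbourhood of `pW w` are all mapped into `U`. -/
lemma FibrewiseCompact.isClosedMap {pY : Y → B} {pW : W → B} (hYc : FibrewiseCompact pY)
    (hWh : FibrewiseT2 pW) (hpW : Continuous pW) {f : Y → W} (hf : Continuous f)
    (hcomm : ∀ y, pW (f y) = pY y) : IsClosedMap f := by
  intro A hA
  refine isOpen_compl_iff.1 (isOpen_iff_mem_nhds.2 fun w hw => ?_)
  set K := A ∩ pY ⁻¹' {pW w}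
  have hK : IsCompact (f '' K) := ((hYc.2 _).inter_left hA).image hf
  have hKw : f '' K ⊆ pW ⁻¹' {pW w} := by
    rintro _ ⟨y, ⟨-, hy⟩, rfl⟩
    exact (hcomm y).trans hy
  have hwK : w ∉ f '' K := fun hwK => hw (Set.image_mono Set.inter_subset_left hwK)
  obtain ⟨U, ⟨hUo, hKU⟩, hUw⟩ :=
    (hasBasis_nhdsSet _).disjoint_iff_left.1 (hWh.disjoint_nhdsSet_nhds hK hKw hwK)
  set C := pY '' (A \ f ⁻¹' U)
  have hC : IsClosed C := hYc.1 _ (hA.sdiff (hUo.preimage hf))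
  have hwC : pW w ∉ C := by
    rintro ⟨y, ⟨hyA, hyU⟩, hy⟩
    exact hyU (hKU ⟨y, ⟨hyA, hy⟩, rfl⟩)
  filter_upwards [hUw, hpW.continuousAt.preimage_mem_nhds (hC.isOpen_compl.mem_nhds hwC)]
  rintro _ hU hC' ⟨y, hyA, rfl⟩
  exact hU (by_contra fun hyU => hC' ⟨y, ⟨hyA, hyU⟩, (hcomm y).symm⟩)

end Fibrewise

section PushoutOfSpan

variable {X Y Z W : Type*}

def PushoutRel (i : X → Y) (j : X → Z) (s t : Y ⊕ Z) : Prop :=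
  ∃ x, s = Sum.inl (i x) ∧ t = Sum.inr (j x)

abbrev Pushout (i : X → Y) (j : X → Z) : Type _ := Quot (PushoutRel i j)

namespace Pushout

variable {i : X → Y} {j : X → Z}

def desc (u : Y → W) (v : Z → W) (h : ∀ x, u (i x) = v (j x)) : Pushout i j → W :=
  Quot.lift (Sum.elim u v) (by rintro _ _ ⟨x, rfl, rfl⟩; exact h x)

def map {X' Y' Z' : Type*} {i' : X' → Y'} {j' : X' → Z'} (fX : X → X') (fY : Y → Y')
    (fZ : Z → Z') (hi : ∀ x, fY (i x) = i' (fX x)) (hj : ∀ x, fZ (j x) = j' (fX x)) :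
    Pushout i j → Pushout i' j' :=
  Quot.map (Sum.map fY fZ) (by
    rintro _ _ ⟨x, rfl, rfl⟩
    exact ⟨fX x, congrArg _ (hi x), congrArg _ (hj x)⟩)

lemma comp_desc {V : Type*} (w : W → V) {u : Y → W} {v : Z → W} (h : ∀ x, u (i x) = v (j x)) :
    w ∘ desc u v h = desc (w ∘ u) (w ∘ v) (fun x => congrArg w (h x)) :=
  funext <| Quot.ind <| by rintro (y | z) <;> rfl

variable [TopologicalSpace Y] [TopologicalSpace Z] [TopologicalSpace W]

lemma continuous_desc_iff {u : Y → W} {v : Z → W} (h : ∀ x, u (i x) = v (j x)) :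
    Continuous (desc u v h) ↔ Continuous u ∧ Continuous v :=
  isQuotientMap_quot_mk.continuous_iff.trans continuous_sumElim

lemma isClosedMap_desc {u : Y → W} {v : Z → W} (h : ∀ x, u (i x) = v (j x))
    (hu : IsClosedMap u) (hv : IsClosedMap v) : IsClosedMap (desc u v h) :=
  IsClosedMap.of_comp_surjective Quot.exists_rep continuous_quot_mk (hu.sumElim hv)

end Pushout

end PushoutOfSpan

section FibrePushout

variable {B X Y Z W : Type*} {pX : X → B} {pY : Y → B} {pZ : Z → B} {pW : W → B}

def fibreMap (f : X → Y) (hf : ∀ x, pY (f x) = pX x) (b : B) :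
    {x // pX x = b} → {y // pY y = b} :=
  Subtype.map f fun x hx => (hf x).trans hx

variable {i : X → Y} {j : X → Z} {u : Y → W} {v : Z → W}
  (hicomm : ∀ x, pY (i x) = pX x) (hjcomm : ∀ x, pZ (j x) = pX x)
  (hucomm : ∀ y, pW (u y) = pY y) (hvcomm : ∀ z, pW (v z) = pZ z)
  (hsq : ∀ x, u (i x) = v (j x))

namespace Pushout

def fibreIncl (b : B) : Pushout (fibreMap i hicomm b) (fibreMap j hjcomm b) → Pushout i j :=
  map Subtype.val Subtype.val Subtype.val (fun _ => rfl) (fun _ => rfl)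

def fibreDesc (b : B) :
    Pushout (fibreMap i hicomm b) (fibreMap j hjcomm b) → {w // pW w = b} :=
  desc (fibreMap u hucomm b) (fibreMap v hvcomm b) fun x => Subtype.ext (hsq x.1)

lemma desc_fibreIncl (b : B) (c : Pushout (fibreMap i hicomm b) (fibreMap j hjcomm b)) :
    desc u v hsq (fibreIncl hicomm hjcomm b c) = fibreDesc hicomm hjcomm hucomm hvcomm hsq b c := by
  induction c using Quot.ind with
  | mk s => rcases s with y | z <;> rfl

lemma exists_fibreIncl_eq (hucomm : ∀ y, pW (u y) = pY y) (hvcomm : ∀ z, pW (v z) = pZ z)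
    {b : B} (a : Pushout i j) (ha : pW (desc u v hsq a) = b) :
    ∃ c, fibreIncl hicomm hjcomm b c = a := by
  subst ha
  induction a using Quot.ind with
  | mk s =>
    rcases s with y | z
    · exact ⟨Quot.mk _ (Sum.inl ⟨y, (hucomm y).symm⟩), rfl⟩
    · exact ⟨Quot.mk _ (Sum.inr ⟨z, (hvcomm z).symm⟩), rfl⟩

theorem bijective_desc_of_bijective_fibreDesc
    (hfib : ∀ b, Bijective (fibreDesc hicomm hjcomm hucomm hvcomm hsq b)) :
    Bijective (desc u v hsq) := by
  refine ⟨fun a a' haa' => ?_, fun w => ?_⟩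
  · obtain ⟨b, hb⟩ : ∃ b, pW (desc u v hsq a) = b := ⟨_, rfl⟩
    obtain ⟨c, rfl⟩ := exists_fibreIncl_eq hicomm hjcomm hsq hucomm hvcomm a hb
    obtain ⟨c', rfl⟩ := exists_fibreIncl_eq hicomm hjcomm hsq hucomm hvcomm a' (haa' ▸ hb)
    rw [desc_fibreIncl hicomm hjcomm hucomm hvcomm hsq,
      desc_fibreIncl hicomm hjcomm hucomm hvcomm hsq] at haa'
    rw [(hfib b).1 (Subtype.ext haa')]
  · obtain ⟨c, hc⟩ := (hfib (pW w)).2 ⟨w, rfl⟩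
    exact ⟨fibreIncl hicomm hjcomm _ c,
      (desc_fibreIncl hicomm hjcomm hucomm hvcomm hsq _ c).trans (congrArg Subtype.val hc)⟩

end Pushout

end FibrePushout

/-- A commuting square of fibrewise compact Hausdorff spaces over `B` which is a pushout
in each fibre is a pushout: the canonical map from the topological pushout `Y ⊔_X Z`
(the quotient of `Y ⊔ Z` identifying `i x` with `j x`) to `W` is a homeomorphism.
Moreover a fibrewise function out of `W` is continuous iff its composites with `u` and `v`
are continuous. -/
theorem fibrewise_pushout_of_fibre_pushouts
    {B X Y Z W : Type} [TopologicalSpace B] [TopologicalSpace X] [TopologicalSpace Y]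
    [TopologicalSpace Z] [TopologicalSpace W]
    (pX : X → B) (pY : Y → B) (pZ : Z → B) (pW : W → B)
    (hpW : Continuous pW)
    (hYc : FibrewiseCompact pY)
    (hZc : FibrewiseCompact pZ)
    (hWh : FibrewiseT2 pW)
    (i : X → Y) (j : X → Z) (u : Y → W) (v : Z → W)
    (hu : Continuous u) (hv : Continuous v)
    (hicomm : ∀ x, pY (i x) = pX x) (hjcomm : ∀ x, pZ (j x) = pX x)
    (hucomm : ∀ y, pW (u y) = pY y) (hvcomm : ∀ z, pW (v z) = pZ z)
    (hsq : ∀ x, u (i x) = v (j x))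
    -- In each fibre, the square is a pushout of topological spaces:
    (hfib : ∀ b : B,
      IsHomeomorph
        ((Quot.lift
          (Sum.elim
            (fun y : {y : Y // pY y = b} => (⟨u y.1, (hucomm y.1).trans y.2⟩ : {w : W // pW w = b}))
            (fun z : {z : Z // pZ z = b} => (⟨v z.1, (hvcomm z.1).trans z.2⟩ : {w : W // pW w = b})))
          (fun s t hst => by
            obtain ⟨x, rfl, rfl⟩ := hst
            exact Subtype.ext (hsq x.1)))
          : Quot (fun s t : {y : Y // pY y = b} ⊕ {z : Z // pZ z = b} =>
              ∃ x : {x : X // pX x = b},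
                s = Sum.inl ⟨i x.1, (hicomm x.1).trans x.2⟩ ∧
                t = Sum.inr ⟨j x.1, (hjcomm x.1).trans x.2⟩) → {w : W // pW w = b})) :
    IsHomeomorph
      ((Quot.lift (Sum.elim u v)
        (fun s t hst => by
          obtain ⟨x, rfl, rfl⟩ := hst
          exact hsq x))
        : Quot (fun s t : Y ⊕ Z => ∃ x : X, s = Sum.inl (i x) ∧ t = Sum.inr (j x)) → W) ∧
    ∀ (V : Type) (_ : TopologicalSpace V) (pV : V → B), Continuous pV →
      ∀ w : W → V, (∀ x, pV (w x) = pW x) →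
        (Continuous w ↔ Continuous (w ∘ u) ∧ Continuous (w ∘ v)) := by
  have hdesc : IsHomeomorph (Pushout.desc u v hsq) :=
    isHomeomorph_iff_continuous_isClosedMap_bijective.2
      ⟨(Pushout.continuous_desc_iff hsq).2 ⟨hu, hv⟩,
        Pushout.isClosedMap_desc hsq (hYc.isClosedMap hWh hpW hu hucomm)
          (hZc.isClosedMap hWh hpW hv hvcomm),
        Pushout.bijective_desc_of_bijective_fibreDesc hicomm hjcomm hucomm hvcomm hsq
          fun b => (hfib b).bijective⟩
  refine ⟨hdesc, fun V _ _ _ w _ => ?_⟩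
  rw [hdesc.isQuotientMap.continuous_iff, Pushout.comp_desc, Pushout.continuous_desc_iff]
end

section
/- Suppose that for every topological space K the map f_X × id_K : A×K → X×K has the homotopy extension property. Then the inclusion ι : Map_f(X,Y) → Map_f^h(X,Y) is a homotopy equivalence: there is a continuous map r : Map_f^h(X,Y) → Map_f(X,Y) such that r∘ι is homotopic to the identity of Map_f(X,Y) and ι∘r is homotopic to the identity of Map_f^h(X,Y). -/
/-
Apply the homotopy extension property to the universal pair over `K = Map_f^h(X,Y)`: the map
`(x, (g, H)) ↦ g x` on `X × K` and the homotopy `((a, (g, H)), t) ↦ H (a, t)` on `A × K`.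
The extension `E` ends at time `1` in maps sending `f_X a` to `H (a, 1) = f_Y a`, which is the
retraction `r`. On the image of `ι` the homotopy `H` is constant, so `E` itself contracts `r ∘ ι`
to the identity; on all of `K` the pair `(E (·, k, s), (a, t) ↦ E (f_X a, k, max s t))` joins
`k = (g, H)` to `ι (r k)`.
-/
open unitInterval

/-- A continuous map `f : A → X` has the homotopy extension property. -/
def HEP {A X : Type} [TopologicalSpace A] [TopologicalSpace X] (f : A → X) : Prop :=
  ∀ (Z : Type) (_ : TopologicalSpace Z) (g : X → Z), Continuous g →
    ∀ G : A × I → Z, Continuous G → (∀ a, G (a, 0) = g (f a)) →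
      ∃ G' : X × I → Z, Continuous G' ∧ (∀ x, G' (x, 0) = g x) ∧
        ∀ a t, G' (f a, t) = G (a, t)

/-- `Map_f(X,Y)`: the space of continuous maps `g : X → Y` with `g ∘ f_X = f_Y`,
topologized as a subspace of `C(X,Y)` with the compact-open topology. -/
abbrev MapRel {A X Y : Type} [TopologicalSpace A] [TopologicalSpace X] [TopologicalSpace Y]
    (fX : C(A, X)) (fY : C(A, Y)) : Type :=
  {g : C(X, Y) // ∀ a, g (fX a) = fY a}

/-- `Map_f^h(X,Y)`: the space of pairs `(g, H)` where `g : X → Y` is continuous and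
`H : A × [0,1] → Y` is a homotopy from `g ∘ f_X` to `f_Y`, topologized as a subspace of
`C(X,Y) × C(A × I, Y)` with compact-open topologies. -/
abbrev MapRelH {A X Y : Type} [TopologicalSpace A] [TopologicalSpace X] [TopologicalSpace Y]
    (fX : C(A, X)) (fY : C(A, Y)) : Type :=
  {gH : C(X, Y) × C(A × I, Y) //
    (∀ a, gH.2 (a, 0) = gH.1 (fX a)) ∧ ∀ a, gH.2 (a, 1) = fY a}

/-- The inclusion `Map_f(X,Y) → Map_f^h(X,Y)`, `g ↦ (g, constant homotopy at f_Y)`. -/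
def inclMapRel {A X Y : Type} [TopologicalSpace A] [TopologicalSpace X] [TopologicalSpace Y]
    (fX : C(A, X)) (fY : C(A, Y)) : C(MapRel fX fY, MapRelH fX fY) where
  toFun g := ⟨(g.1, fY.comp ContinuousMap.fst), fun a => (g.2 a).symm, fun _ => rfl⟩
  continuous_toFun :=
    Continuous.subtype_mk (continuous_subtype_val.prodMk continuous_const) _

@[simp]
lemma inclMapRel_apply_snd_apply {A X Y : Type} [TopologicalSpace A] [TopologicalSpace X]
    [TopologicalSpace Y] (fX : C(A, X)) (fY : C(A, Y)) (g : MapRel fX fY) (p : A × I) :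
    (inclMapRel fX fY g).1.2 p = fY p.1 :=
  rfl

namespace MapRel

variable {A X Y T : Type} [TopologicalSpace A] [TopologicalSpace X] [TopologicalSpace Y]
  [TopologicalSpace T] {fX : C(A, X)} {fY : C(A, Y)}

def curry (F : C(T × X, Y)) (hF : ∀ t a, F (t, fX a) = fY a) : C(T, MapRel fX fY) :=
  ⟨fun t => ⟨F.curry t, hF t⟩, F.curry.continuous.subtype_mk _⟩

end MapRel

namespace MapRelH

variable {A X Y T : Type} [TopologicalSpace A] [TopologicalSpace X] [TopologicalSpace Y]
  [TopologicalSpace T] {fX : C(A, X)} {fY : C(A, Y)}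

def curry (F : C(T × X, Y)) (H : C(T × (A × I), Y))
    (hH₀ : ∀ t a, H (t, (a, 0)) = F (t, fX a)) (hH₁ : ∀ t a, H (t, (a, 1)) = fY a) :
    C(T, MapRelH fX fY) :=
  ⟨fun t => ⟨(F.curry t, H.curry t), hH₀ t, hH₁ t⟩,
    (F.curry.continuous.prodMk H.curry.continuous).subtype_mk _⟩

section curry

variable (F : C(T × X, Y)) (H : C(T × (A × I), Y))
  (hH₀ : ∀ t a, H (t, (a, 0)) = F (t, fX a)) (hH₁ : ∀ t a, H (t, (a, 1)) = fY a)

@[simp]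
lemma curry_apply_fst_apply (t : T) (x : X) : (curry F H hH₀ hH₁ t).1.1 x = F (t, x) :=
  rfl

@[simp]
lemma curry_apply_snd_apply (t : T) (p : A × I) : (curry F H hH₀ hH₁ t).1.2 p = H (t, p) :=
  rfl

end curry

@[ext]
lemma ext {k l : MapRelH fX fY} (h₁ : ∀ x, k.1.1 x = l.1.1 x) (h₂ : ∀ p, k.1.2 p = l.1.2 p) :
    k = l :=
  Subtype.ext (Prod.ext (ContinuousMap.ext h₁) (ContinuousMap.ext h₂))

end MapRelH

/-- A homotopy of the universal map `(x, (g, H)) ↦ g x` that extends the universal homotopy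
`((a, (g, H)), t) ↦ H (a, t)`. -/
structure MapRelH.UniversalExtension {A X Y : Type} [TopologicalSpace A] [TopologicalSpace X]
    [TopologicalSpace Y] (fX : C(A, X)) (fY : C(A, Y)) where
  toFun : C((X × MapRelH fX fY) × I, Y)
  map_zero : ∀ x k, toFun ((x, k), 0) = k.1.1 x
  map_fX : ∀ a k t, toFun ((fX a, k), t) = k.1.2 (a, t)

namespace MapRelH.UniversalExtension

variable {A X Y : Type} [TopologicalSpace A] [TopologicalSpace X] [TopologicalSpace Y]
  {fX : C(A, X)} {fY : C(A, Y)} (E : UniversalExtension fX fY)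

def retraction : C(MapRelH fX fY, MapRel fX fY) :=
  MapRel.curry (E.toFun.comp ⟨fun p => ((p.2, p.1), 1), by fun_prop⟩) fun k a =>
    (E.map_fX a k 1).trans (k.2.2 a)

lemma retraction_comp_incl_homotopic_id :
    (E.retraction.comp (inclMapRel fX fY)).Homotopic (ContinuousMap.id _) := by
  let F : C(I × MapRel fX fY, MapRel fX fY) :=
    MapRel.curry (E.toFun.comp ⟨fun p => ((p.2, inclMapRel fX fY p.1.2), p.1.1), by fun_prop⟩)
      fun p a => E.map_fX a _ _
  refine ContinuousMap.Homotopic.symm ⟨⟨F, fun g => ?_, fun g => rfl⟩⟩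
  ext x
  exact E.map_zero x _

lemma incl_comp_retraction_homotopic_id :
    ((inclMapRel fX fY).comp E.retraction).Homotopic (ContinuousMap.id _) := by
  let F : C(I × MapRelH fX fY, MapRelH fX fY) :=
    MapRelH.curry (E.toFun.comp ⟨fun p => ((p.2, p.1.2), p.1.1), by fun_prop⟩)
      (E.toFun.comp ⟨fun p => ((fX p.2.1, p.1.2), max p.1.1 p.2.2), by fun_prop⟩)
      (fun p a => by simp) fun p a => by
        simpa [max_eq_right le_one'] using (E.map_fX a p.2 1).trans (p.2.2.2 a)
  refine ContinuousMap.Homotopic.symm ⟨⟨F, fun k => ?_, fun k => ?_⟩⟩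
  · ext x
    · simpa [F] using E.map_zero x k
    · simpa [F] using E.map_fX _ k _
  · ext x
    · rfl
    · simpa [F, max_eq_left le_one'] using (E.map_fX _ k 1).trans (k.2.2 _)

end MapRelH.UniversalExtension

lemma MapRelH.nonempty_universalExtension {A X Y : Type} [TopologicalSpace A]
    [TopologicalSpace X] [TopologicalSpace Y] [CompactSpace A] [T2Space A] [CompactSpace X]
    [T2Space X] {fX : C(A, X)} {fY : C(A, Y)}
    (hhep : HEP (fun p : A × MapRelH fX fY => (fX p.1, p.2))) :
    Nonempty (UniversalExtension fX fY) := by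
  obtain ⟨E, hE, hE₀, hEA⟩ := hhep Y inferInstance (fun p => p.2.1.1 p.1) (by fun_prop)
    (fun q => q.1.2.1.2 (q.1.1, q.2)) (by fun_prop) fun p => p.2.2.1 p.1
  exact ⟨⟨E, hE⟩, fun x k => hE₀ (x, k), fun a k t => hEA (a, k) t⟩

theorem inclMapRel_homotopyEquiv_general
    {A X Y : Type} [TopologicalSpace A] [TopologicalSpace X] [TopologicalSpace Y]
    [CompactSpace A] [T2Space A] [CompactSpace X] [T2Space X]
    (fX : C(A, X)) (fY : C(A, Y))
    (hhep : ∀ (K : Type) (_ : TopologicalSpace K),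
      HEP (fun p : A × K => (fX p.1, p.2))) :
    ∃ r : C(MapRelH fX fY, MapRel fX fY),
      (r.comp (inclMapRel fX fY)).Homotopic (ContinuousMap.id _) ∧
      ((inclMapRel fX fY).comp r).Homotopic (ContinuousMap.id _) := by
  obtain ⟨E⟩ := MapRelH.nonempty_universalExtension (hhep (MapRelH fX fY) inferInstance)
  exact ⟨E.retraction, E.retraction_comp_incl_homotopic_id, E.incl_comp_retraction_homotopic_id⟩

/-- If `f_X × id_K` has the homotopy extension property for every space `K`, then the
inclusion `Map_f(X,Y) → Map_f^h(X,Y)` is a homotopy equivalence. -/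
theorem inclMapRel_homotopyEquiv
    {A X Y : Type} [TopologicalSpace A] [TopologicalSpace X] [TopologicalSpace Y]
    [CompactSpace A] [T2Space A] [CompactSpace X] [T2Space X] [CompactSpace Y] [T2Space Y]
    (fX : C(A, X)) (fY : C(A, Y))
    (hhep : ∀ (K : Type) (_ : TopologicalSpace K),
      HEP (fun p : A × K => (fX p.1, p.2))) :
    ∃ r : C(MapRelH fX fY, MapRel fX fY),
      (r.comp (inclMapRel fX fY)).Homotopic (ContinuousMap.id _) ∧
      ((inclMapRel fX fY).comp r).Homotopic (ContinuousMap.id _) :=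
  inclMapRel_homotopyEquiv_general fX fY hhep
end

section
/- Suppose that for every topological space K the map f_X × id_K : A×K → X×K has the homotopy extension property. Let Map_f^{≃}(X,Y) ⊆ Map_f(X,Y) be the subspace consisting of those g that are homotopy equivalences X → Y, and let Map_f^{h,≃}(X,Y) ⊆ Map_f^h(X,Y) be the subspace of pairs (g,H) in which g is a homotopy equivalence. Then the restriction of the inclusion ι to a map Map_f^{≃}(X,Y) → Map_f^{h,≃}(X,Y) is a homotopy equivalence. -/
/-!
Apply the homotopy extension property of `f_X × id_K`, for `K = Map_f^{h,≃}(X,Y)`, to the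
tautological data `((x, (g, H)) ↦ g x, ((a, (g, H)), t) ↦ H (a, t))`. This yields, continuously
in `(g, H)`, a homotopy `Ψ_s` of `g` with `Ψ_s ∘ f_X = H (-, s)`; each `Ψ_s` is homotopic to `g`,
hence again a homotopy equivalence. The retraction is `(g, H) ↦ Ψ_1`: the homotopy `Ψ_s` joins
the identity to `r ∘ ι`, and `(Ψ_s, H|[s, 1])` joins the identity to `ι ∘ r`.
-/

open unitInterval

/-- A continuous map `g : X → Y` is a homotopy equivalence. -/
def IsHtpyEquiv {X Y : Type} [TopologicalSpace X] [TopologicalSpace Y] (g : C(X, Y)) : Prop :=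
  ∃ k : C(Y, X), (k.comp g).Homotopic (ContinuousMap.id X) ∧
    (g.comp k).Homotopic (ContinuousMap.id Y)

/-- `Map_f^{≃}(X,Y)`: the subspace of `Map_f(X,Y)` of maps `g` (with `g ∘ f_X = f_Y`)
that are homotopy equivalences. -/
abbrev MapRelE {A X Y : Type} [TopologicalSpace A] [TopologicalSpace X] [TopologicalSpace Y]
    (fX : C(A, X)) (fY : C(A, Y)) : Type :=
  {g : C(X, Y) // (∀ a, g (fX a) = fY a) ∧ IsHtpyEquiv g}

/-- `Map_f^{h,≃}(X,Y)`: the subspace of `Map_f^h(X,Y)` of pairs `(g, H)` in which `g` is a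
homotopy equivalence. -/
abbrev MapRelHE {A X Y : Type} [TopologicalSpace A] [TopologicalSpace X] [TopologicalSpace Y]
    (fX : C(A, X)) (fY : C(A, Y)) : Type :=
  {gH : C(X, Y) × C(A × I, Y) //
    ((∀ a, gH.2 (a, 0) = gH.1 (fX a)) ∧ ∀ a, gH.2 (a, 1) = fY a) ∧ IsHtpyEquiv gH.1}

/-- The restricted inclusion `Map_f^{≃}(X,Y) → Map_f^{h,≃}(X,Y)`,
`g ↦ (g, constant homotopy at f_Y)`. -/
def inclMapRelE {A X Y : Type} [TopologicalSpace A] [TopologicalSpace X] [TopologicalSpace Y]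
    (fX : C(A, X)) (fY : C(A, Y)) : C(MapRelE fX fY, MapRelHE fX fY) where
  toFun g := ⟨(g.1, fY.comp ContinuousMap.fst),
    ⟨fun a => (g.2.1 a).symm, fun _ => rfl⟩, g.2.2⟩
  continuous_toFun :=
    Continuous.subtype_mk (continuous_subtype_val.prodMk continuous_const) _

open ContinuousMap

instance : PathConnectedSpace I :=
  isPathConnected_iff_pathConnectedSpace.mp
    ((convex_Icc (0 : ℝ) 1).isPathConnected ⟨0, Set.left_mem_Icc.2 zero_le_one⟩)

variable {A X Y : Type} [TopologicalSpace A] [TopologicalSpace X] [TopologicalSpace Y]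

theorem IsHtpyEquiv.of_homotopic {g g' : C(X, Y)} (h : g.Homotopic g') (hg : IsHtpyEquiv g) :
    IsHtpyEquiv g' := by
  obtain ⟨k, hkg, hgk⟩ := hg
  exact ⟨k, ((Homotopic.refl k).comp h.symm).trans hkg, (h.symm.comp (Homotopic.refl k)).trans hgk⟩

theorem Joined.homotopic [LocallyCompactPair X Y] {f g : C(X, Y)} (h : Joined f g) :
    f.Homotopic g :=
  ⟨{ toFun := fun p => h.somePath p.1 p.2
     continuous_toFun := by fun_prop
     map_zero_left := by simp
     map_one_left := by simp }⟩

theorem HEP.exists_continuous_family [LocallyCompactPair X Y] [LocallyCompactPair (A × I) Y]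
    {K : Type} [TopologicalSpace K] {fX : C(A, X)} (hep : HEP fun p : A × K => (fX p.1, p.2))
    (g : C(K, C(X, Y))) (H : C(K, C(A × I, Y))) (hH : ∀ k a, H k (a, 0) = g k (fX a)) :
    ∃ Ψ : C(K × I, C(X, Y)), (∀ k, Ψ (k, 0) = g k) ∧ ∀ k s a, Ψ (k, s) (fX a) = H k (a, s) := by
  obtain ⟨G, hG, hG0, hGf⟩ := hep Y inferInstance (fun p => g p.2 p.1) (by fun_prop)
    (fun q => H q.1.2 (q.1.1, q.2)) (by fun_prop) fun p => hH p.2 p.1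
  let Ψ : C((K × I) × X, Y) := ⟨fun q => G ((q.2, q.1.1), q.1.2), by fun_prop⟩
  exact ⟨Ψ.curry, fun k => ext fun x => hG0 (x, k), fun k s a => hGf (a, k) s⟩

structure HomotopyExtensionFamily (fX : C(A, X)) (fY : C(A, Y)) where
  homotopy : C(MapRelHE fX fY × I, C(X, Y))
  apply_zero : ∀ k, homotopy (k, 0) = k.1.1
  extends_homotopy : ∀ k s a, homotopy (k, s) (fX a) = k.1.2 (a, s)

namespace HomotopyExtensionFamily

variable [LocallyCompactPair X Y] {fX : C(A, X)} {fY : C(A, Y)} (Ψ : HomotopyExtensionFamily fX fY)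

theorem isHtpyEquiv (k : MapRelHE fX fY) (s : I) : IsHtpyEquiv (Ψ.homotopy (k, s)) := by
  have hjoined : Joined k.1.1 (Ψ.homotopy (k, s)) := by
    simpa only [Ψ.apply_zero] using
      (PathConnectedSpace.joined (0 : I) s).map
        (by fun_prop : Continuous fun t => Ψ.homotopy (k, t))
  exact k.2.2.of_homotopic hjoined.homotopic

def retraction : C(MapRelHE fX fY, MapRelE fX fY) where
  toFun k := ⟨Ψ.homotopy (k, 1), fun a => (Ψ.extends_homotopy k 1 a).trans (k.2.1.2 a),
    Ψ.isHtpyEquiv k 1⟩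
  continuous_toFun := by fun_prop

theorem retraction_comp_incl_homotopic_id :
    (Ψ.retraction.comp (inclMapRelE fX fY)).Homotopic (ContinuousMap.id _) :=
  Homotopic.symm ⟨{
    toFun := fun p => ⟨Ψ.homotopy (inclMapRelE fX fY p.2, p.1),
      fun a => Ψ.extends_homotopy _ _ a, Ψ.isHtpyEquiv _ _⟩
    continuous_toFun := by fun_prop
    map_zero_left := fun g => Subtype.ext (Ψ.apply_zero _)
    map_one_left := fun _ => rfl }⟩

/-- `H` reparametrized to the interval `[s, 1]`, as `σ (σ s * σ t) = s + t (1 - s)`. -/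
def restrictHomotopy [LocallyCompactPair (A × I) Y] : C(I × C(A × I, Y), C(A × I, Y)) :=
  ContinuousMap.curry ⟨fun q => q.1.2 (q.2.1, σ (σ q.1.1 * σ q.2.2)), by fun_prop⟩

theorem incl_comp_retraction_homotopic_id [LocallyCompactPair (A × I) Y] :
    ((inclMapRelE fX fY).comp Ψ.retraction).Homotopic (ContinuousMap.id _) :=
  Homotopic.symm ⟨{
    toFun := fun p => ⟨(Ψ.homotopy (p.2, p.1), restrictHomotopy (p.1, p.2.1.2)),
      ⟨fun a => by simp [restrictHomotopy, Ψ.extends_homotopy], fun a => by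
        simpa [restrictHomotopy] using p.2.2.1.2 a⟩, Ψ.isHtpyEquiv _ _⟩
    continuous_toFun := by fun_prop
    map_zero_left := fun k => by
      ext x
      · simp [Ψ.apply_zero]
      · simp [restrictHomotopy]
    map_one_left := fun k => by
      ext x
      · rfl
      · simpa [restrictHomotopy, inclMapRelE] using k.2.1.2 x.1 }⟩

end HomotopyExtensionFamily

theorem inclMapRelE_homotopyEquiv_general
    {A X Y : Type} [TopologicalSpace A] [TopologicalSpace X] [TopologicalSpace Y]
    [CompactSpace A] [T2Space A] [CompactSpace X] [T2Space X]
    (fX : C(A, X)) (fY : C(A, Y))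
    (hhep : ∀ (K : Type) (_ : TopologicalSpace K),
      HEP (fun p : A × K => (fX p.1, p.2))) :
    ∃ r : C(MapRelHE fX fY, MapRelE fX fY),
      (r.comp (inclMapRelE fX fY)).Homotopic (ContinuousMap.id _) ∧
      ((inclMapRelE fX fY).comp r).Homotopic (ContinuousMap.id _) := by
  obtain ⟨Ψ, hΨ0, hΨA⟩ := (hhep (MapRelHE fX fY) inferInstance).exists_continuous_family
    ⟨fun k => k.1.1, by fun_prop⟩ ⟨fun k => k.1.2, by fun_prop⟩ fun k => k.2.1.1
  let Φ : HomotopyExtensionFamily fX fY := ⟨Ψ, hΨ0, hΨA⟩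
  exact ⟨Φ.retraction, Φ.retraction_comp_incl_homotopic_id,
    Φ.incl_comp_retraction_homotopic_id⟩

/-- If `f_X × id_K` has the homotopy extension property for every space `K`, then the
inclusion `Map_f^{≃}(X,Y) → Map_f^{h,≃}(X,Y)` is a homotopy equivalence. -/
theorem inclMapRelE_homotopyEquiv
    {A X Y : Type} [TopologicalSpace A] [TopologicalSpace X] [TopologicalSpace Y]
    [CompactSpace A] [T2Space A] [CompactSpace X] [T2Space X] [CompactSpace Y] [T2Space Y]
    (fX : C(A, X)) (fY : C(A, Y))
    (hhep : ∀ (K : Type) (_ : TopologicalSpace K),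
      HEP (fun p : A × K => (fX p.1, p.2))) :
    ∃ r : C(MapRelHE fX fY, MapRelE fX fY),
      (r.comp (inclMapRelE fX fY)).Homotopic (ContinuousMap.id _) ∧
      ((inclMapRelE fX fY).comp r).Homotopic (ContinuousMap.id _) :=
  inclMapRelE_homotopyEquiv_general fX fY hhep
end

section
/- Let (X, f_X), (Y, f_Y) and (Z, f_Z) be spaces under A. If there exists a homotopy equivalence from (X, f_X) to (Y, f_Y) and a homotopy equivalence from (Y, f_Y) to (Z, f_Z), then there exists a homotopy equivalence from (X, f_X) to (Z, f_Z). -/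
open unitInterval

/-- The set of endpoints `{0,1} × A ⊆ I × A`, used for homotopies rel endpoints. -/
def relEnds (A : Type) [TopologicalSpace A] : Set (I × A) :=
  {p | p.1 = 0 ∨ p.1 = 1}

/-- A homotopy equivalence from `(X, f_X)` to `(Y, f_Y)` (spaces under `A`): a 6-tuple
`(φ, ψ, G, H, K, L)` where `G : ψ∘φ ⇒ id_X`, `H : φ∘ψ ⇒ id_Y`, `K : φ∘f_X ⇒ f_Y`,
`L : ψ∘f_Y ⇒ f_X`, the homotopies `L·(ψ∘K)` and `G∘f_X` are homotopic rel endpoints, and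
the homotopies `K·(φ∘L)` and `H∘f_Y` are homotopic rel endpoints. -/
structure UnderHtpyEquiv {A X Y : Type} [TopologicalSpace A] [TopologicalSpace X]
    [TopologicalSpace Y] (fX : C(A, X)) (fY : C(A, Y)) where
  φ : C(X, Y)
  ψ : C(Y, X)
  G : ContinuousMap.Homotopy (ψ.comp φ) (ContinuousMap.id X)
  H : ContinuousMap.Homotopy (φ.comp ψ) (ContinuousMap.id Y)
  K : ContinuousMap.Homotopy (φ.comp fX) fY
  L : ContinuousMap.Homotopy (ψ.comp fY) fX
  rel_left : ContinuousMap.HomotopicRel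
    (((ContinuousMap.Homotopy.refl ψ).comp K).trans L).toContinuousMap
    (G.comp (ContinuousMap.Homotopy.refl fX)).toContinuousMap
    (relEnds A)
  rel_right : ContinuousMap.HomotopicRel
    (((ContinuousMap.Homotopy.refl φ).comp L).trans K).toContinuousMap
    (H.comp (ContinuousMap.Homotopy.refl fY)).toContinuousMap
    (relEnds A)

/-! A homotopy `F : f₀ ⇒ f₁` of maps `A → X` is a path from `f₀` to `f₁` in `C(A, X)`, and since
`A` is locally compact, homotopies of homotopies rel endpoints are exactly path homotopies. So the
coherence conditions are equations in the fundamental groupoid of `C(A, X)`, where concatenation is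
associative. The first condition for the composite follows from those of the two factors and
the exchange law `(g₀ ∘ F)·(G ∘ f₁) = (G ∘ f₀)·(g₁ ∘ F)`: both sides run along the boundary of
the square `(s, t) ↦ G_t ∘ F_s`, and `I × I` is contractible. The second condition is the first
one for the composite of the reversed equivalences. -/

open ContinuousMap

local notation:70 h:71 " ◁ " F:70 => ContinuousMap.Homotopy.comp (ContinuousMap.Homotopy.refl h) F

local notation:70 G:70 " ▷ " f:71 => ContinuousMap.Homotopy.comp G (ContinuousMap.Homotopy.refl f)

instance unitInterval.contractibleSpace : ContractibleSpace I :=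
  (convex_Icc (0 : ℝ) 1).contractibleSpace (Set.nonempty_Icc.2 zero_le_one)

namespace ContinuousMap.Homotopy

variable {A X Y : Type} [TopologicalSpace A] [TopologicalSpace X] [TopologicalSpace Y]
  {f₀ f₁ f₂ : C(A, X)}

def toPath (F : Homotopy f₀ f₁) : Path f₀ f₁ where
  toContinuousMap := F.curry
  source' := by ext; simp
  target' := by ext; simp

@[simp]
theorem toPath_apply (F : Homotopy f₀ f₁) (t : I) (a : A) : F.toPath t a = F (t, a) :=
  rfl

def pathClass (F : Homotopy f₀ f₁) : Path.Homotopic.Quotient f₀ f₁ :=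
  .mk F.toPath

theorem pathClass_trans (F : Homotopy f₀ f₁) (G : Homotopy f₁ f₂) :
    (F.trans G).pathClass = F.pathClass.trans G.pathClass := by
  rw [pathClass, pathClass, pathClass, ← Path.Homotopic.Quotient.mk_trans]
  congr 1
  ext t a
  simp only [toPath_apply, trans_apply, Path.trans_apply]
  split_ifs <;> rfl

theorem pathClass_refl_comp_trans (h : C(X, Y)) (F : Homotopy f₀ f₁) (G : Homotopy f₁ f₂) :
    (h ◁ F.trans G).pathClass = (h ◁ F).pathClass.trans (h ◁ G).pathClass := by
  rw [← pathClass_trans]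
  congr 1
  ext x
  simp only [comp_apply, trans_apply, refl_apply]
  split_ifs <;> rfl

theorem pathClass_refl_comp_congr (h : C(X, Y)) {F G : Homotopy f₀ f₁}
    (hFG : F.pathClass = G.pathClass) : (h ◁ F).pathClass = (h ◁ G).pathClass :=
  Path.Homotopic.Quotient.eq.2 <|
    (Path.Homotopic.Quotient.eq.1 hFG).map ⟨(h.comp ·), continuous_postcomp h⟩

theorem pathClass_whisker_exchange {g₀ g₁ : C(X, Y)} (F : Homotopy f₀ f₁)
    (G : Homotopy g₀ g₁) :
    ((g₀ ◁ F).trans (G ▷ f₁)).pathClass = ((G ▷ f₀).trans (g₁ ◁ F)).pathClass := by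
  let Φ : C(I × I, C(A, Y)) :=
    ContinuousMap.curry ⟨fun p => G (p.1.2, F (p.1.1, p.2)), by fun_prop⟩
  have h₀ : g₀.comp f₀ = Φ (0, 0) := by ext; simp [Φ]
  have h₁ : g₁.comp f₁ = Φ (1, 1) := by ext; simp [Φ]
  have lower : ((g₀ ◁ F).trans (G ▷ f₁)).toPath =
      (((Path.id.prod (.refl 0)).trans ((Path.refl 1).prod .id)).map Φ.continuous).cast h₀ h₁ := by
    ext t a
    simp only [toPath_apply, trans_apply, comp_apply, refl_apply, Path.cast_coe, Path.map_coe,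
      Path.trans_apply, Path.prod_coe, Path.id_apply, Path.refl_apply, Function.comp_apply]
    split_ifs <;> simp [Φ]
  have upper : ((G ▷ f₀).trans (g₁ ◁ F)).toPath =
      ((((Path.refl 0).prod .id).trans (Path.id.prod (.refl 1))).map Φ.continuous).cast h₀ h₁ := by
    ext t a
    simp only [toPath_apply, trans_apply, comp_apply, refl_apply, Path.cast_coe, Path.map_coe,
      Path.trans_apply, Path.prod_coe, Path.id_apply, Path.refl_apply, Function.comp_apply]
    split_ifs <;> simp [Φ]
  rw [pathClass, pathClass, lower, upper, Path.Homotopic.Quotient.eq]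
  exact ((SimplyConnectedSpace.paths_homotopic _ _).map Φ).pathCast h₀ h₁

theorem homotopicRel_relEnds_iff [LocallyCompactSpace A] (F G : Homotopy f₀ f₁) :
    HomotopicRel F.toContinuousMap G.toContinuousMap (relEnds A) ↔ F.pathClass = G.pathClass := by
  rw [pathClass, pathClass, Path.Homotopic.Quotient.eq]
  constructor
  · rintro ⟨Q⟩
    exact ⟨{ toContinuousMap := ContinuousMap.curry
                (Q.toContinuousMap.comp (Homeomorph.prodAssoc I I A : C((I × I) × A, I × I × A)))
             map_zero_left := fun t => ContinuousMap.ext fun a => Q.apply_zero (t, a)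
             map_one_left := fun t => ContinuousMap.ext fun a => Q.apply_one (t, a)
             prop' := fun s t ht =>
               ContinuousMap.ext fun a => Q.prop s (t, a) (by simpa [relEnds] using ht) }⟩
  · rintro ⟨R⟩
    exact ⟨{ toContinuousMap := (ContinuousMap.uncurry R.toContinuousMap).comp
                ((Homeomorph.prodAssoc I I A).symm : C(I × I × A, (I × I) × A))
             map_zero_left := fun x => DFunLike.congr_fun (R.apply_zero x.1) x.2
             map_one_left := fun x => DFunLike.congr_fun (R.apply_one x.1) x.2
             prop' := fun s x hx =>
               DFunLike.congr_fun (R.eq_fst s (by simpa [relEnds] using hx)) x.2 }⟩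

end ContinuousMap.Homotopy

namespace UnderHtpyEquiv

variable {A X Y Z : Type} [TopologicalSpace A] [TopologicalSpace X] [TopologicalSpace Y]
  [TopologicalSpace Z] {fX : C(A, X)} {fY : C(A, Y)} {fZ : C(A, Z)}

def symm (e : UnderHtpyEquiv fX fY) : UnderHtpyEquiv fY fX :=
  ⟨e.ψ, e.φ, e.H, e.G, e.L, e.K, e.rel_right, e.rel_left⟩

noncomputable def transG (e₁ : UnderHtpyEquiv fX fY) (e₂ : UnderHtpyEquiv fY fZ) :
    Homotopy ((e₁.ψ.comp e₂.ψ).comp (e₂.φ.comp e₁.φ)) (ContinuousMap.id X) :=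
  (e₁.ψ ◁ e₂.G ▷ e₁.φ).trans e₁.G

noncomputable def transK (e₁ : UnderHtpyEquiv fX fY) (e₂ : UnderHtpyEquiv fY fZ) :
    Homotopy ((e₂.φ.comp e₁.φ).comp fX) fZ :=
  (e₂.φ ◁ e₁.K).trans e₂.K

theorem rel_left_trans [LocallyCompactSpace A] (e₁ : UnderHtpyEquiv fX fY)
    (e₂ : UnderHtpyEquiv fY fZ) :
    HomotopicRel ((e₁.ψ.comp e₂.ψ ◁ transK e₁ e₂).trans (transK e₂.symm e₁.symm)).toContinuousMap
      (transG e₁ e₂ ▷ fX).toContinuousMap (relEnds A) := by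
  have h₁ := (Homotopy.homotopicRel_relEnds_iff _ _).1 e₁.rel_left
  have h₂ := (Homotopy.homotopicRel_relEnds_iff _ _).1 e₂.rel_left
  refine (Homotopy.homotopicRel_relEnds_iff _ _).2 ?_
  -- The `rfl`s identify `(g.comp h).comp f` with `g.comp (h.comp f)` and `(id _).comp f` with `f`.
  open Homotopy Path.Homotopic.Quotient in
  calc _ = (e₁.ψ.comp (e₂.ψ.comp e₂.φ) ◁ e₁.K).pathClass.trans
          ((e₁.ψ ◁ (e₂.ψ ◁ e₂.K).trans e₂.L).pathClass.trans e₁.L.pathClass) := by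
        simp only [transK, symm, pathClass_refl_comp_trans, pathClass_trans, trans_assoc]
        rfl
    _ = (e₁.ψ.comp (e₂.ψ.comp e₂.φ) ◁ e₁.K).pathClass.trans
          ((e₁.ψ ◁ e₂.G ▷ fY).pathClass.trans e₁.L.pathClass) := by
        rw [pathClass_refl_comp_congr _ h₂]
        rfl
    _ = (e₁.ψ ◁ (e₂.ψ.comp e₂.φ ◁ e₁.K).trans (e₂.G ▷ fY)).pathClass.trans
          e₁.L.pathClass := by
        rw [pathClass_refl_comp_trans]
        exact (trans_assoc _ _ _).symm
    _ = (e₁.ψ ◁ (e₂.G ▷ e₁.φ.comp fX).trans (ContinuousMap.id Y ◁ e₁.K)).pathClass.trans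
          e₁.L.pathClass := by
        rw [pathClass_refl_comp_congr _ (pathClass_whisker_exchange e₁.K e₂.G)]
    _ = (e₁.ψ ◁ e₂.G ▷ e₁.φ.comp fX).pathClass.trans ((e₁.ψ ◁ e₁.K).trans e₁.L).pathClass := by
        rw [pathClass_refl_comp_trans, pathClass_trans]
        exact trans_assoc _ _ _
    _ = _ := by
        rw [h₁]
        exact (pathClass_trans _ _).symm

noncomputable def trans [LocallyCompactSpace A] (e₁ : UnderHtpyEquiv fX fY)
    (e₂ : UnderHtpyEquiv fY fZ) : UnderHtpyEquiv fX fZ where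
  φ := e₂.φ.comp e₁.φ
  ψ := e₁.ψ.comp e₂.ψ
  G := transG e₁ e₂
  H := transG e₂.symm e₁.symm
  K := transK e₁ e₂
  L := transK e₂.symm e₁.symm
  rel_left := rel_left_trans e₁ e₂
  rel_right := rel_left_trans e₂.symm e₁.symm

end UnderHtpyEquiv

theorem underHtpyEquiv_trans_general
    {A X Y Z : Type} [TopologicalSpace A] [TopologicalSpace X] [TopologicalSpace Y]
    [TopologicalSpace Z]
    [CompactSpace A] [T2Space A]
    (fX : C(A, X)) (fY : C(A, Y)) (fZ : C(A, Z))
    (h₁ : Nonempty (UnderHtpyEquiv fX fY)) (h₂ : Nonempty (UnderHtpyEquiv fY fZ)) :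
    Nonempty (UnderHtpyEquiv fX fZ) :=
  h₁.map2 UnderHtpyEquiv.trans h₂

/-- Homotopy equivalence of spaces under `A` is transitive. -/
theorem underHtpyEquiv_trans
    {A X Y Z : Type} [TopologicalSpace A] [TopologicalSpace X] [TopologicalSpace Y]
    [TopologicalSpace Z]
    [CompactSpace A] [T2Space A] [CompactSpace X] [T2Space X]
    [CompactSpace Y] [T2Space Y] [CompactSpace Z] [T2Space Z]
    (fX : C(A, X)) (fY : C(A, Y)) (fZ : C(A, Z))
    (h₁ : Nonempty (UnderHtpyEquiv fX fY)) (h₂ : Nonempty (UnderHtpyEquiv fY fZ)) :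
    Nonempty (UnderHtpyEquiv fX fZ) :=
  underHtpyEquiv_trans_general fX fY fZ h₁ h₂
end

section
/- Let (X, f_X) be a space under A, and let T ⊆ X be a closed subspace such that T (with the subspace topology) is contractible and the inclusion T ↪ X has the homotopy extension property. Let X/T be the quotient space of X obtained by collapsing T to a point, π : X → X/T the quotient map, and f_{X/T} = π∘f_X. Then there exists a homotopy equivalence (of spaces under A) from (X, f_X) to (X/T, f_{X/T}). -/
open unitInterval

/-! By the homotopy extension property, a contraction of `T` extends to a homotopy `D` from `id_X`
to a map `r` that keeps `T` inside `T` at all times and collapses `T` to a point. Then `r` descends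
to `ψ : X/T → X`, `D` is a homotopy `ψ ∘ π ⇒ id`, and `π ∘ D` descends to a homotopy `π ∘ ψ ⇒ id`
on `X/T`. Since the second homotopy is the image of the first under `π`, taking `K` constant and
`L := D ∘ f_X` makes both coherence conditions hold up to reparametrization of time. -/

section Reparametrization

variable {A : Type} {X : Type*} [TopologicalSpace A] [TopologicalSpace X]

theorem ContinuousMap.homotopicRel_comp_prodMap_id (F : C(I × A, X)) {ρ₀ ρ₁ : C(I, I)}
    (h₀ : ρ₀ 0 = ρ₁ 0) (h₁ : ρ₀ 1 = ρ₁ 1) :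
    (F.comp (ρ₀.prodMap (.id A))).HomotopicRel (F.comp (ρ₁.prodMap (.id A))) (relEnds A) := by
  refine HomotopicRel.comp_continuousMap ⟨{
    toFun := fun p => (Set.Icc.convexComb (ρ₀ p.2.1) (ρ₁ p.2.1) p.1, p.2.2)
    continuous_toFun := by fun_prop
    map_zero_left := by simp
    map_one_left := by simp
    prop' := ?_ }⟩ F
  rintro s ⟨t, a⟩ (rfl | rfl) <;> simp [h₀, h₁]

namespace ContinuousMap.Homotopy

theorem refl_trans_homotopicRel {f₀ f₁ : C(A, X)} (F : f₀.Homotopy f₁) :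
    ((refl f₀).trans F).toContinuousMap.HomotopicRel F.toContinuousMap (relEnds A) := by
  let ρ : C(I, I) := ⟨fun t => Set.projIcc 0 1 zero_le_one (2 * t - 1), by fun_prop⟩
  have hρ : ((refl f₀).trans F).toContinuousMap = F.toContinuousMap.comp (ρ.prodMap (.id A)) := by
    ext ⟨t, a⟩
    show ite _ _ _ = F.extend (2 * t - 1) a
    split_ifs with ht
    · exact (F.extend_apply_of_le_zero (by linarith) a).symm
    · rfl
  rw [hρ]
  exact homotopicRel_comp_prodMap_id F.toContinuousMap (ρ₁ := .id I) (by simp [ρ]) (by norm_num [ρ])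

theorem trans_refl_homotopicRel {f₀ f₁ : C(A, X)} (F : f₀.Homotopy f₁) :
    (F.trans (refl f₁)).toContinuousMap.HomotopicRel F.toContinuousMap (relEnds A) := by
  let ρ : C(I, I) := ⟨fun t => Set.projIcc 0 1 zero_le_one (2 * t), by fun_prop⟩
  have hρ : (F.trans (refl f₁)).toContinuousMap = F.toContinuousMap.comp (ρ.prodMap (.id A)) := by
    ext ⟨t, a⟩
    show ite _ _ _ = F.extend (2 * t) a
    split_ifs with ht
    · rfl
    · exact (F.extend_apply_of_one_le (by linarith) a).symm
  rw [hρ]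
  exact homotopicRel_comp_prodMap_id F.toContinuousMap (ρ₁ := .id I) (by simp [ρ]) (by simp [ρ])

end ContinuousMap.Homotopy

end Reparametrization

namespace ContinuousMap

variable {X Y : Type*} [TopologicalSpace X] [TopologicalSpace Y] {R : X → X → Prop}

def quotMk (R : X → X → Prop) : C(X, Quot R) := ⟨Quot.mk R, continuous_quot_mk⟩

def quotLift (f : C(X, Y)) (h : ∀ x y, R x y → f x = f y) : C(Quot R, Y) :=
  ⟨Quot.lift f h, continuous_quot_lift h f.continuous⟩

def Homotopy.quot {r : C(X, X)} (D : (ContinuousMap.id X).Homotopy r)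
    (hD : ∀ t x y, R x y → Quot.mk R (D (t, x)) = Quot.mk R (D (t, y)))
    (hr : ∀ x y, R x y → r x = r y) :
    (ContinuousMap.id (Quot R)).Homotopy ((quotMk R).comp (quotLift r hr)) where
  toFun p := Quot.lift (fun x => Quot.mk R (D (p.1, x))) (hD p.1) p.2
  -- `I × Quot R` is a quotient of `I × X` because `I` is locally compact.
  continuous_toFun := isQuotientMap_quot_mk.continuous_lift_prod_right
    (continuous_quot_mk.comp D.continuous)
  map_zero_left := by rintro ⟨x⟩; simp
  map_one_left := by rintro ⟨x⟩; exact congrArg (Quot.mk R) (D.apply_one x)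

end ContinuousMap

section UnderA

variable {A X Y : Type} [TopologicalSpace A] [TopologicalSpace X] [TopologicalSpace Y]

open ContinuousMap (quotMk quotLift)

def UnderHtpyEquiv.ofWhiskerEq (fX : C(A, X)) {φ : C(X, Y)} {ψ : C(Y, X)}
    (G : (ψ.comp φ).Homotopy (.id X)) (H : (φ.comp ψ).Homotopy (.id Y))
    (hGH : ∀ t x, H (t, φ x) = φ (G (t, x))) : UnderHtpyEquiv fX (φ.comp fX) where
  φ := φ
  ψ := ψ
  G := G
  H := H
  K := .refl _
  L := G.compContinuousMap fX
  rel_left := ContinuousMap.Homotopy.refl_trans_homotopicRel _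
  rel_right := by
    have hL : ((ContinuousMap.Homotopy.refl φ).comp (G.compContinuousMap fX)).toContinuousMap =
        (H.comp (.refl (φ.comp fX))).toContinuousMap := by
      ext ⟨t, a⟩
      exact (hGH t (fX a)).symm
    exact hL ▸ ContinuousMap.Homotopy.trans_refl_homotopicRel _

def UnderHtpyEquiv.quot {R : X → X → Prop} {r : C(X, X)} (fX : C(A, X))
    (D : (ContinuousMap.id X).Homotopy r)
    (hD : ∀ t x y, R x y → Quot.mk R (D (t, x)) = Quot.mk R (D (t, y)))
    (hr : ∀ x y, R x y → r x = r y) : UnderHtpyEquiv fX ((quotMk R).comp fX) :=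
  .ofWhiskerEq fX (ψ := quotLift r hr) D.symm (D.quot hD hr).symm fun _ _ => rfl

theorem HEP.exists_homotopy_extension {T : Type} [TopologicalSpace T] {i : C(T, X)} (hi : HEP i)
    (g : C(X, Y)) {k : C(T, Y)} (F : (g.comp i).Homotopy k) :
    ∃ (g' : C(X, Y)) (F' : g.Homotopy g'), ∀ t a, F' (t, i a) = F (t, a) := by
  obtain ⟨E, hE, hE₀, hEi⟩ :=
    hi Y _ g g.continuous (fun p => F (p.2, p.1)) (by fun_prop) (by simp)
  exact ⟨⟨fun x => E (x, 1), by fun_prop⟩,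
    { toFun := fun p => E (p.2, p.1)
      continuous_toFun := hE.comp continuous_swap
      map_zero_left := hE₀
      map_one_left := fun _ => rfl }, fun t a => hEi a t⟩

theorem HEP.exists_homotopy_id_collapsing {T : Set X} [ContractibleSpace T]
    (hT : HEP ((↑) : T → X)) :
    ∃ (r : C(X, X)) (D : (ContinuousMap.id X).Homotopy r), (∀ t, ∀ x ∈ T, D (t, x) ∈ T) ∧
      ∃ x₀, ∀ x ∈ T, r x = x₀ := by
  let i : C(T, X) := ⟨(↑), continuous_subtype_val⟩
  obtain ⟨x₀, ⟨C⟩⟩ := id_nullhomotopic T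
  obtain ⟨r, D, hD⟩ :=
    exists_homotopy_extension (i := i) hT (.id X) ((ContinuousMap.Homotopy.refl i).comp C)
  refine ⟨r, D, fun t x hx => hD t ⟨x, hx⟩ ▸ (C (t, ⟨x, hx⟩)).2, x₀, fun x hx => ?_⟩
  calc r x = D (1, x) := (D.apply_one x).symm
    _ = C (1, ⟨x, hx⟩) := hD 1 ⟨x, hx⟩
    _ = x₀ := congrArg Subtype.val (C.apply_one _)

end UnderA

theorem underHtpyEquiv_quotient_contractible_general
    {A X : Type} [TopologicalSpace A] [TopologicalSpace X]
    (fX : C(A, X)) (T : Set X)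
    (hTcontr : ContractibleSpace T)
    (hHEP : HEP ((↑) : T → X)) :
    Nonempty (UnderHtpyEquiv fX
      (⟨fun a => Quot.mk (fun x y : X => x ∈ T ∧ y ∈ T) (fX a),
        continuous_quot_mk.comp fX.continuous⟩ :
        C(A, Quot (fun x y : X => x ∈ T ∧ y ∈ T)))) := by
  obtain ⟨r, D, hDT, x₀, hr⟩ := hHEP.exists_homotopy_id_collapsing
  exact ⟨.quot fX D (fun t x y hxy => Quot.sound ⟨hDT t x hxy.1, hDT t y hxy.2⟩)
    fun x y hxy => (hr x hxy.1).trans (hr y hxy.2).symm⟩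

/-- If `T ⊆ X` is a closed contractible subspace whose inclusion is a cofibration, then
`(X, f_X)` is homotopy equivalent, as a space under `A`, to the quotient `(X/T, π ∘ f_X)`.
Here `X/T` is the quotient of `X` collapsing `T` to a point. -/
theorem underHtpyEquiv_quotient_contractible
    {A X : Type} [TopologicalSpace A] [TopologicalSpace X]
    [CompactSpace A] [T2Space A] [CompactSpace X] [T2Space X]
    (fX : C(A, X)) (T : Set X) (hTclosed : IsClosed T)
    (hTcontr : ContractibleSpace T)
    (hHEP : HEP ((↑) : T → X)) :
    Nonempty (UnderHtpyEquiv fX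
      (⟨fun a => Quot.mk (fun x y : X => x ∈ T ∧ y ∈ T) (fX a),
        continuous_quot_mk.comp fX.continuous⟩ :
        C(A, Quot (fun x y : X => x ∈ T ∧ y ∈ T)))) :=
  underHtpyEquiv_quotient_contractible_general fX T hTcontr hHEP
end

section
/- Assume Q_a is connected for every a ∈ A. Then Q = {(a,y) ∈ A×ℝⁿ : y ∈ Q_a} (a configuration of orthogonal line segments over A) is fibrewise contractible; more precisely, Q is fibrewise convex: there exists a continuous map h : {(a,p,q) ∈ A×ℝⁿ×ℝⁿ : p ∈ Q_a and q ∈ Q_a} × [0,1] → ℝⁿ such that for every such (a,p,q) and every t ∈ [0,1] one has h((a,p,q),t) ∈ Q_a, h((a,p,q),0) = p, and h((a,p,q),1) = q. -/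
/-!
In a single fibre, `Q` is a union of unit segments, one in each coordinate direction, and a step
along the `j`-th segment moves only the `j`-th coordinate. A shortest chain of segments between two
points of a connected fibre therefore moves every coordinate at most once, so it stays in the box
spanned by its endpoints. At a junction of two segments, any point of the fibre agrees with the
junction in one of the two directions, and this rules out an interior maximum of the ℓ¹-distance
to a point of the fibre along such a chain. Hence for `p, q ∈ Q` and `s ∈ [0, 1]` there is exactly
one point of `Q` in the box spanned by `p` and `q` at ℓ¹-distance `s * ‖q - p‖₁` from `p`: it exists
by the intermediate value theorem along the chain from `p` to `q`, and it is unique because along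
a chain between two such points the distances to `p` and to `q` have no interior maximum and sum to
`‖q - p‖₁`. This point is the homotopy; its graph is closed and it is locally bounded, so it is
continuous in `(a, p, q, s)`.
-/

open Set Filter Topology unitInterval

theorem continuous_of_isClosed_graph_of_eventually_mem_compact {X Y : Type*}
    [TopologicalSpace X] [TopologicalSpace Y] {f : X → Y}
    (hf : IsClosed {p : X × Y | p.2 = f p.1})
    (hK : ∀ x₀, ∃ K, IsCompact K ∧ ∀ᶠ x in 𝓝 x₀, f x ∈ K) : Continuous f := by
  refine continuous_iff_continuousAt.2 fun x₀ => ?_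
  obtain ⟨K, hKc, hfK⟩ := hK x₀
  refine hKc.tendsto_nhds_of_unique_mapClusterPt hfK fun y _ hy => ?_
  have hgraph : MapClusterPt (x₀, y) (𝓝 x₀) fun x => (x, f x) := by
    rw [((𝓝 x₀).basis_sets.prod_nhds (𝓝 y).basis_sets).mapClusterPt_iff_frequently]
    rintro ⟨s, t⟩ ⟨hs, ht⟩
    exact ((mapClusterPt_iff_frequently.1 hy t ht).and_eventually hs).mono fun x hx => ⟨hx.2, hx.1⟩
  exact hf.mem_of_mapClusterPt hgraph (Eventually.of_forall fun x => rfl)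

theorem continuous_of_isClosed_graph_of_norm_le {X E : Type*} [TopologicalSpace X]
    [SeminormedAddCommGroup E] [ProperSpace E] {f : X → E} {r : X → ℝ}
    (hf : IsClosed {p : X × E | p.2 = f p.1}) (hr : Continuous r) (hfr : ∀ x, ‖f x‖ ≤ r x) :
    Continuous f :=
  continuous_of_isClosed_graph_of_eventually_mem_compact hf fun x₀ =>
    ⟨_, isCompact_closedBall 0 (r x₀ + 1),
      (hr.continuousAt.eventually_lt continuousAt_const (lt_add_one _)).mono fun x hx =>
        mem_closedBall_zero_iff.2 ((hfr x).trans hx.le)⟩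

theorem reflTransGen_of_isPreconnected_iUnion {X ι : Type*} [TopologicalSpace X] [Finite ι]
    {F : ι → Set X} (hclosed : ∀ i, IsClosed (F i)) (hne : ∀ i, (F i).Nonempty)
    (hconn : IsPreconnected (⋃ i, F i)) (i k : ι) :
    Relation.ReflTransGen (fun i j => (F i ∩ F j).Nonempty) i k := by
  set S := {k | Relation.ReflTransGen (fun i j => (F i ∩ F j).Nonempty) i k}
  have hcover : (⋃ i, F i) ⊆ (⋃ l ∈ S, F l) ∪ ⋃ l ∈ Sᶜ, F l := by
    refine iUnion_subset fun l => ?_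
    by_cases hl : l ∈ S
    · exact subset_union_of_subset_left (subset_biUnion_of_mem hl) _
    · exact subset_union_of_subset_right (subset_biUnion_of_mem (u := F) (show l ∈ Sᶜ from hl)) _
  have hdisj : (⋃ i, F i) ∩ ((⋃ l ∈ S, F l) ∩ ⋃ l ∈ Sᶜ, F l) = ∅ := by
    refine eq_empty_of_forall_notMem fun y ⟨_, hyS, hyS'⟩ => ?_
    obtain ⟨l, hl, hyl⟩ := mem_iUnion₂.1 hyS
    obtain ⟨l', hl', hyl'⟩ := mem_iUnion₂.1 hyS'
    exact hl' (hl.tail ⟨y, hyl, hyl'⟩)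
  obtain hS | hS := isPreconnected_iff_subset_of_disjoint_closed.1 hconn _ _
    ((toFinite S).isClosed_biUnion fun l _ => hclosed l)
    ((toFinite Sᶜ).isClosed_biUnion fun l _ => hclosed l) hcover hdisj
  · obtain ⟨y, hy⟩ := hne k
    obtain ⟨l, hl, hyl⟩ := mem_iUnion₂.1 (hS (mem_iUnion_of_mem k hy))
    exact hl.tail ⟨y, hyl, hy⟩
  · obtain ⟨y, hy⟩ := hne i
    obtain ⟨l, hl, hyl⟩ := mem_iUnion₂.1 (hS (mem_iUnion_of_mem i hy))
    exact (hl (Relation.ReflTransGen.single ⟨y, hy, hyl⟩)).elim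

lemma Nat.apply_eq_apply_of_forall_eq_succ {α : Type*} {f : ℕ → α} {a b : ℕ} (hab : a ≤ b)
    (h : ∀ t, a ≤ t → t < b → f t = f (t + 1)) : f a = f b := by
  induction b, hab using Nat.le_induction with
  | base => rfl
  | succ b hab ih => rw [ih fun t h₁ h₂ => h t h₁ (by omega), h b hab (by omega)]

lemma Nat.exists_apply_ne_succ_of_ne {α : Type*} {f : ℕ → α} {m : ℕ} (h : f 0 ≠ f m) :
    ∃ t < m, f t ≠ f (t + 1) := by
  by_contra! H
  exact h (Nat.apply_eq_apply_of_forall_eq_succ m.zero_le fun t _ ht => H t ht)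

lemma eq_of_abs_sub_eq_of_mem_uIcc {a b x y : ℝ} (hx : x ∈ uIcc a b) (hy : y ∈ uIcc a b)
    (h : |x - a| = |y - a|) : x = y := by
  rcases le_total a b with hab | hab
  · rw [uIcc_of_le hab] at hx hy
    rwa [abs_of_nonneg (sub_nonneg.2 hx.1), abs_of_nonneg (sub_nonneg.2 hy.1), sub_left_inj] at h
  · rw [uIcc_of_ge hab] at hx hy
    rwa [abs_of_nonpos (sub_nonpos.2 hx.2), abs_of_nonpos (sub_nonpos.2 hy.2), neg_inj,
      sub_left_inj] at h

lemma Set.apply_mem_uIcc {ι : Type*} {p q y : ι → ℝ} (hy : y ∈ uIcc p q) (j : ι) :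
    y j ∈ uIcc (p j) (q j) :=
  (pi_univ_uIcc p q ▸ hy) j (mem_univ j)

lemma norm_le_max_of_mem_uIcc {ι : Type*} [Fintype ι] {p q y : ι → ℝ} (hy : y ∈ uIcc p q) :
    ‖y‖ ≤ max ‖p‖ ‖q‖ := by
  refine (pi_norm_le_iff_of_nonneg (by positivity)).2 fun j => ?_
  have hpq : max |p j| |q j| ≤ max ‖p‖ ‖q‖ := max_le_max (norm_le_pi_norm p j) (norm_le_pi_norm q j)
  rcases mem_uIcc.1 (apply_mem_uIcc hy j) with h | h
  · exact (abs_le_max_abs_abs h.1 h.2).trans hpq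
  · exact (abs_le_max_abs_abs h.1 h.2).trans ((max_comm _ _).le.trans hpq)

namespace OrthogonalSegments

variable {ι : Type*}

def axisSegment (c : ι → ι → ℝ) (i : ι) : Set (ι → ℝ) :=
  {y | (∀ j, j ≠ i → y j = c i j) ∧ y i ∈ Icc (0 : ℝ) 1}

def segmentUnion (c : ι → ι → ℝ) : Set (ι → ℝ) :=
  ⋃ i, axisSegment c i

def l1Dist [Fintype ι] (y z : ι → ℝ) : ℝ :=
  ∑ j, |y j - z j|

variable {c : ι → ι → ℝ} {i k : ι} {y z : ι → ℝ}

lemma axisSegment_nonempty (c : ι → ι → ℝ) (i : ι) : (axisSegment c i).Nonempty := by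
  classical
  exact ⟨fun j => if j = i then 0 else c i j, fun j hj => if_neg hj, by simp⟩

lemma convex_axisSegment (c : ι → ι → ℝ) (i : ι) : Convex ℝ (axisSegment c i) :=
  fun _ hy _ hz a b ha hb hab =>
    ⟨fun j hj => by simp [hy.1 j hj, hz.1 j hj, ← add_mul, hab],
      convex_Icc (0 : ℝ) 1 hy.2 hz.2 ha hb hab⟩

lemma isClosed_setOf_mem_axisSegment {X : Type*} [TopologicalSpace X] {f : X → ι → ℝ}
    {c : X → ι → ι → ℝ} (hf : Continuous f) (hc : Continuous c) (i : ι) :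
    IsClosed {x | f x ∈ axisSegment (c x) i} := by
  have : {x | f x ∈ axisSegment (c x) i} =
      (⋂ j, ⋂ _ : j ≠ i, {x | f x j = c x i j}) ∩ (fun x => f x i) ⁻¹' Icc 0 1 := by
    ext; simp [axisSegment]
  rw [this]
  exact (isClosed_iInter fun j => isClosed_iInter fun _ =>
    isClosed_eq (f := fun x => f x j) (g := fun x => c x i j) (by fun_prop) (by fun_prop)).inter
      (isClosed_Icc.preimage (f := fun x => f x i) (by fun_prop))

lemma isClosed_setOf_mem_segmentUnion [Finite ι] {X : Type*} [TopologicalSpace X]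
    {f : X → ι → ℝ} {c : X → ι → ι → ℝ} (hf : Continuous f) (hc : Continuous c) :
    IsClosed {x | f x ∈ segmentUnion (c x)} := by
  simp only [segmentUnion, mem_iUnion, ofPred_exists]
  exact isClosed_iUnion_of_finite (isClosed_setOf_mem_axisSegment hf hc)

lemma isClosed_axisSegment (c : ι → ι → ℝ) (i : ι) : IsClosed (axisSegment c i) :=
  isClosed_setOf_mem_axisSegment continuous_id continuous_const i

lemma apply_eq_of_mem_axisSegment (hy : y ∈ axisSegment c i) (hz : z ∈ axisSegment c i)
    {j : ι} (hj : j ≠ i) : y j = z j := by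
  rw [hy.1 j hj, hz.1 j hj]

lemma eq_of_mem_axisSegment_inter (hik : i ≠ k) (hy : y ∈ axisSegment c i)
    (hy' : y ∈ axisSegment c k) (hz : z ∈ axisSegment c i) (hz' : z ∈ axisSegment c k) :
    y = z := by
  funext j
  rcases eq_or_ne j i with rfl | hj
  · exact apply_eq_of_mem_axisSegment hy' hz' hik
  · exact apply_eq_of_mem_axisSegment hy hz hj

section l1Dist

variable [Fintype ι] {p q : ι → ℝ}

lemma continuous_l1Dist : Continuous fun x : (ι → ℝ) × (ι → ℝ) => l1Dist x.1 x.2 := by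
  unfold l1Dist; fun_prop

lemma l1Dist_self (p : ι → ℝ) : l1Dist p p = 0 := by
  simp [l1Dist]

lemma l1Dist_add_l1Dist_of_mem_uIcc (hy : y ∈ uIcc p q) :
    l1Dist y p + l1Dist y q = l1Dist q p := by
  rw [l1Dist, l1Dist, l1Dist, ← Finset.sum_add_distrib]
  refine Finset.sum_congr rfl fun j _ => ?_
  have := dist_add_dist_of_mem_segment (segment_eq_uIcc (p j) (q j) ▸ apply_mem_uIcc hy j)
  rwa [Real.dist_eq, Real.dist_eq, Real.dist_eq, abs_sub_comm (p j), abs_sub_comm (p j)] at this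

lemma l1Dist_sub_l1Dist_of_forall_ne (h : ∀ j, j ≠ k → y j = z j) (p : ι → ℝ) :
    l1Dist y p - l1Dist z p = |y k - p k| - |z k - p k| := by
  rw [l1Dist, l1Dist, ← Finset.sum_sub_distrib,
    Finset.sum_eq_single k (fun j _ hj => by rw [h j hj, sub_self]) (by simp)]

lemma apply_ne_of_l1Dist_lt (h : ∀ j, j ≠ k → y j = z j) (hlt : l1Dist y p < l1Dist z p) :
    p k ≠ z k := by
  intro hk
  have := l1Dist_sub_l1Dist_of_forall_ne h p
  rw [hk, sub_self, abs_zero, sub_zero] at this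
  linarith [abs_nonneg (y k - z k)]

lemma l1Dist_ne_of_mem_uIcc {e : ι → ℝ} (hy : y ∈ uIcc p e) (hz : z ∈ uIcc p e)
    (h : ∀ j, j ≠ k → y j = z j) (hyz : y ≠ z) : l1Dist y p ≠ l1Dist z p := by
  intro hdist
  refine hyz (funext fun j => ?_)
  rcases eq_or_ne j k with rfl | hj
  · have := l1Dist_sub_l1Dist_of_forall_ne h p
    rw [hdist, sub_self] at this
    exact eq_of_abs_sub_eq_of_mem_uIcc (apply_mem_uIcc hy j) (apply_mem_uIcc hz j)
      (sub_eq_zero.1 this.symm)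
  · exact h j hj

end l1Dist

def IsWalk (c : ι → ι → ℝ) (v : ℕ → ι → ℝ) (m : ℕ) : Prop :=
  ∀ t < m, ∃ k, v t ∈ axisSegment c k ∧ v (t + 1) ∈ axisSegment c k

def IsMinimalWalk (c : ι → ι → ℝ) (v : ℕ → ι → ℝ) (m : ℕ) : Prop :=
  IsWalk c v m ∧ ∀ m' v', IsWalk c v' m' → v' 0 = v 0 → v' m' = v m → m ≤ m'

lemma IsWalk.cons {v : ℕ → ι → ℝ} {m : ℕ} (hv : IsWalk c v m) {p : ι → ℝ}
    (hp : p ∈ axisSegment c k) (hv₀ : v 0 ∈ axisSegment c k) :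
    IsWalk c (fun t => if t = 0 then p else v (t - 1)) (m + 1) := by
  rintro (_ | t) ht
  · exact ⟨k, by simpa using hp, by simpa using hv₀⟩
  · simpa using hv t (by omega)

lemma exists_isWalk_of_reflTransGen {q : ι → ℝ} (hq : q ∈ axisSegment c k)
    (h : Relation.ReflTransGen (fun i j => (axisSegment c i ∩ axisSegment c j).Nonempty) i k) :
    ∀ p ∈ axisSegment c i, ∃ m v, IsWalk c v m ∧ v 0 = p ∧ v m = q := by
  induction h using Relation.ReflTransGen.head_induction_on with
  | refl =>
    intro p hp
    have hq₀ : IsWalk c (fun _ => q) 0 := fun t ht => absurd ht t.not_lt_zero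
    exact ⟨1, _, hq₀.cons hp hq, rfl, rfl⟩
  | head hr _ ih =>
    intro p hp
    obtain ⟨w, hw, hw'⟩ := hr
    obtain ⟨m, v, hv, rfl, rfl⟩ := ih w hw'
    exact ⟨m + 1, _, hv.cons hp hw, rfl, by simp⟩

lemma exists_isMinimalWalk [Finite ι] (hT : IsPreconnected (segmentUnion c)) {p q : ι → ℝ}
    (hp : p ∈ segmentUnion c) (hq : q ∈ segmentUnion c) :
    ∃ m v, IsMinimalWalk c v m ∧ v 0 = p ∧ v m = q := by
  classical
  have hwalk : ∃ m v, IsWalk c v m ∧ v 0 = p ∧ v m = q := by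
    obtain ⟨i, hpi⟩ := mem_iUnion.1 hp
    obtain ⟨k, hqk⟩ := mem_iUnion.1 hq
    exact exists_isWalk_of_reflTransGen hqk (reflTransGen_of_isPreconnected_iUnion
      (isClosed_axisSegment c) (axisSegment_nonempty c) hT i k) p hpi
  obtain ⟨v, hv, h₀, hm⟩ := Nat.find_spec hwalk
  exact ⟨_, v, ⟨hv, fun m' v' hv' h₀' hm' =>
    Nat.find_min' hwalk ⟨v', hv', h₀'.trans h₀, hm'.trans hm⟩⟩, h₀, hm⟩

variable {v : ℕ → ι → ℝ} {m : ℕ}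

lemma IsWalk.skip (hv : IsWalk c v m) {t s : ℕ} (hts : t + 1 < s) (hsm : s ≤ m)
    (ht : v t ∈ axisSegment c k) (hs : v s ∈ axisSegment c k) :
    IsWalk c (fun r => if r ≤ t then v r else v (r + (s - t - 1))) (m - (s - t - 1)) := by
  intro r hr
  rcases lt_trichotomy r t with hrt | rfl | hrt
  · obtain ⟨k', h₁, h₂⟩ := hv r (by omega)
    exact ⟨k', by simpa [hrt.le] using h₁, by simpa [show r + 1 ≤ t by omega] using h₂⟩
  · refine ⟨k, by simpa using ht, ?_⟩
    simpa [show r + 1 + (s - r - 1) = s by omega] using hs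
  · obtain ⟨k', h₁, h₂⟩ := hv (r + (s - t - 1)) (by omega)
    refine ⟨k', by simpa [show ¬r ≤ t by omega] using h₁, ?_⟩
    simpa [show ¬r + 1 ≤ t by omega,
      show r + 1 + (s - t - 1) = r + (s - t - 1) + 1 by omega] using h₂

lemma IsWalk.mem_axisSegment_of_apply_ne (hv : IsWalk c v m) {t : ℕ} (ht : t < m) {j : ι}
    (hj : v t j ≠ v (t + 1) j) : v t ∈ axisSegment c j ∧ v (t + 1) ∈ axisSegment c j := by
  obtain ⟨k, h₁, h₂⟩ := hv t ht
  rcases eq_or_ne j k with rfl | hjk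
  · exact ⟨h₁, h₂⟩
  · exact absurd (apply_eq_of_mem_axisSegment h₁ h₂ hjk) hj

namespace IsMinimalWalk

variable (hv : IsMinimalWalk c v m)
include hv

lemma not_shortcut {t s : ℕ} (hts : t + 1 < s) (hsm : s ≤ m) (ht : v t ∈ axisSegment c k)
    (hs : v s ∈ axisSegment c k) : False := by
  have := hv.2 _ _ (hv.1.skip hts hsm ht hs) (by simp)
    (by simp [show ¬m - (s - t - 1) ≤ t by omega, show m - (s - t - 1) + (s - t - 1) = m by omega])
  omega

lemma step_ne {t : ℕ} (ht : t < m) : v t ≠ v (t + 1) := by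
  intro heq
  rcases Nat.lt_or_ge (t + 1) m with h | h
  · obtain ⟨k, h₁, h₂⟩ := hv.1 (t + 1) h
    exact hv.not_shortcut (t := t) (s := t + 2) (by omega) h (heq ▸ h₁) h₂
  rcases Nat.eq_zero_or_pos t with rfl | htpos
  · have := hv.2 0 (fun _ => v 0) (fun r hr => absurd hr r.not_lt_zero) rfl
      (by rw [heq, show m = 0 + 1 by omega])
    omega
  · obtain ⟨k, h₁, h₂⟩ := hv.1 (t - 1) (by omega)
    rw [Nat.sub_add_cancel htpos] at h₂
    exact hv.not_shortcut (t := t - 1) (s := t + 1) (by omega) (by omega) h₁ (heq ▸ h₂)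

lemma eq_of_apply_ne {t t' : ℕ} {j : ι} (ht : t < m) (ht' : t' < m)
    (h : v t j ≠ v (t + 1) j) (h' : v t' j ≠ v (t' + 1) j) : t = t' := by
  have hs := hv.1.mem_axisSegment_of_apply_ne ht h
  have hs' := hv.1.mem_axisSegment_of_apply_ne ht' h'
  rcases lt_trichotomy t t' with hlt | heq | hlt
  · exact (hv.not_shortcut (by omega) (by omega) hs.1 hs'.2).elim
  · exact heq
  · exact (hv.not_shortcut (by omega) (by omega) hs'.1 hs.2).elim

lemma apply_eq_or_apply_eq {t : ℕ} (ht : t ≤ m) (j : ι) : v t j = v 0 j ∨ v t j = v m j := by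
  by_cases hch : ∃ t' < t, v t' j ≠ v (t' + 1) j
  · obtain ⟨t', ht't, hne⟩ := hch
    refine Or.inr (Nat.apply_eq_apply_of_forall_eq_succ (f := fun r => v r j) ht fun r hr hrm => ?_)
    by_contra hne'
    have := hv.eq_of_apply_ne (by omega) hrm hne hne'
    omega
  · push Not at hch
    exact Or.inl (Nat.apply_eq_apply_of_forall_eq_succ (f := fun r => v r j) t.zero_le
      fun r _ hr => hch r hr).symm

lemma mem_uIcc {t : ℕ} (ht : t ≤ m) : v t ∈ uIcc (v 0) (v m) := by
  rw [← pi_univ_uIcc]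
  intro j _
  rcases hv.apply_eq_or_apply_eq ht j with h | h <;> rw [h]
  exacts [left_mem_uIcc, right_mem_uIcc]

end IsMinimalWalk

theorem apply_eq_or_apply_eq_of_mem_inter [Finite ι] (hT : IsPreconnected (segmentUnion c))
    {P w : ι → ℝ} (hP : P ∈ segmentUnion c) {u u' : ι} (hu : u ≠ u')
    (hw : w ∈ axisSegment c u) (hw' : w ∈ axisSegment c u') : P u = w u ∨ P u' = w u' := by
  obtain ⟨m, v, hv, rfl, rfl⟩ := exists_isMinimalWalk hT hP (mem_iUnion_of_mem u hw)
  by_contra! hne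
  obtain ⟨tu, htu, hchu⟩ := Nat.exists_apply_ne_succ_of_ne (f := fun t => v t u) hne.1
  obtain ⟨tu', htu', hchu'⟩ := Nat.exists_apply_ne_succ_of_ne (f := fun t => v t u') hne.2
  have hsu := hv.1.mem_axisSegment_of_apply_ne htu hchu
  have hsu' := hv.1.mem_axisSegment_of_apply_ne htu' hchu'
  have htne : tu ≠ tu' := by
    rintro rfl
    exact hchu (congrFun (eq_of_mem_axisSegment_inter hu hsu.1 hsu'.1 hsu.2 hsu'.2) u)
  wlog hlt : tu < tu' generalizing u u' tu tu'
  · exact this hu.symm hw' hw hne.symm tu' htu' hchu' tu htu hchu hsu' hsu htne.symm (by omega)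
  -- coordinate `u'` is frozen before step `tu'`, and at time `tu` the walk is on
  -- `axisSegment c u`, where coordinate `u'` equals `w u'`
  refine hne.2 ((Nat.apply_eq_apply_of_forall_eq_succ (f := fun t => v t u') tu.zero_le
    fun t _ ht => ?_).trans (apply_eq_of_mem_axisSegment hsu.1 hw hu.symm))
  by_contra hch
  have := hv.eq_of_apply_ne (by omega) htu' hch hchu'
  omega

namespace IsMinimalWalk

variable [Fintype ι] (hv : IsMinimalWalk c v m) {P e : ι → ℝ}
include hv

lemma l1Dist_ne_succ (hbox : ∀ t ≤ m, v t ∈ uIcc P e) {t : ℕ} (ht : t < m) :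
    l1Dist (v t) P ≠ l1Dist (v (t + 1)) P := by
  obtain ⟨k, h₁, h₂⟩ := hv.1 t ht
  exact l1Dist_ne_of_mem_uIcc (hbox t ht.le) (hbox _ ht)
    (fun j hj => apply_eq_of_mem_axisSegment h₁ h₂ hj) (hv.step_ne ht)

theorem l1Dist_le_max (hT : IsPreconnected (segmentUnion c)) (hP : P ∈ segmentUnion c)
    (hbox : ∀ t ≤ m, v t ∈ uIcc P e) {t : ℕ} (ht : t ≤ m) :
    l1Dist (v t) P ≤ max (l1Dist (v 0) P) (l1Dist (v m) P) := by
  obtain ⟨t₀, ht₀, hmax⟩ :=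
    (Finset.range (m + 1)).exists_max_image (fun t => l1Dist (v t) P) ⟨0, by simp⟩
  simp only [Finset.mem_range] at ht₀ hmax
  refine (hmax t (by omega)).trans ?_
  rcases Nat.eq_zero_or_pos t₀ with rfl | hpos
  · exact le_max_left _ _
  rcases (Nat.lt_succ_iff.1 ht₀).eq_or_lt with rfl | hlt
  · exact le_max_right _ _
  exfalso
  obtain ⟨k₁, h₁, h₁'⟩ := hv.1 (t₀ - 1) (by omega)
  obtain ⟨k₂, h₂, h₂'⟩ := hv.1 t₀ hlt
  rw [Nat.sub_add_cancel hpos] at h₁'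
  have hrise : l1Dist (v (t₀ - 1)) P < l1Dist (v t₀) P := by
    refine (hmax _ (by omega)).lt_of_ne ?_
    simpa [Nat.sub_add_cancel hpos] using hv.l1Dist_ne_succ hbox (t := t₀ - 1) (by omega)
  have hfall : l1Dist (v (t₀ + 1)) P < l1Dist (v t₀) P :=
    (hmax _ (by omega)).lt_of_ne (hv.l1Dist_ne_succ hbox hlt).symm
  have hk : k₁ ≠ k₂ := by
    rintro rfl
    exact hv.not_shortcut (t := t₀ - 1) (s := t₀ + 1) (by omega) (by omega) h₁ h₂'
  -- the walk turns at the junction `v t₀`, where `P` would have to differ in both directions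
  rcases apply_eq_or_apply_eq_of_mem_inter hT hP hk h₁' h₂ with h | h
  · exact apply_ne_of_l1Dist_lt (fun j hj => apply_eq_of_mem_axisSegment h₁ h₁' hj) hrise h
  · exact apply_ne_of_l1Dist_lt (fun j hj => apply_eq_of_mem_axisSegment h₂' h₂ hj) hfall h

end IsMinimalWalk

variable [Fintype ι] {p q : ι → ℝ}

theorem eq_of_mem_uIcc_of_l1Dist_eq (hT : IsPreconnected (segmentUnion c))
    (hp : p ∈ segmentUnion c) (hq : q ∈ segmentUnion c) (hy : y ∈ segmentUnion c)
    (hz : z ∈ segmentUnion c) (hyb : y ∈ uIcc p q) (hzb : z ∈ uIcc p q)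
    (h : l1Dist y p = l1Dist z p) : y = z := by
  obtain ⟨m, v, hv, rfl, rfl⟩ := exists_isMinimalWalk hT hy hz
  have hbox : ∀ t ≤ m, v t ∈ uIcc p q := fun t ht => uIcc_subset_uIcc hyb hzb (hv.mem_uIcc ht)
  have hbox' : ∀ t ≤ m, v t ∈ uIcc q p := fun t ht => uIcc_comm p q ▸ hbox t ht
  have hsum : ∀ t ≤ m, l1Dist (v t) p + l1Dist (v t) q = l1Dist q p :=
    fun t ht => l1Dist_add_l1Dist_of_mem_uIcc (hbox t ht)
  -- the distances to `p` and to `q` have no interior maximum and sum to a constant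
  have hconst : ∀ t ≤ m, l1Dist (v t) p = l1Dist (v 0) p := by
    intro t ht
    have hle_p := hv.l1Dist_le_max hT hp hbox ht
    have hle_q := hv.l1Dist_le_max hT hq hbox' ht
    rw [← h, max_self] at hle_p
    rw [show l1Dist (v m) q = l1Dist (v 0) q by linarith [hsum 0 m.zero_le, hsum m le_rfl],
      max_self] at hle_q
    linarith [hsum t ht, hsum 0 m.zero_le]
  rcases Nat.eq_zero_or_pos m with rfl | hm
  · rfl
  · exact absurd (hconst 1 hm).symm (hv.l1Dist_ne_succ hbox hm)

theorem exists_mem_uIcc_l1Dist_eq (hT : IsPreconnected (segmentUnion c))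
    (hp : p ∈ segmentUnion c) (hq : q ∈ segmentUnion c) {s : ℝ} (hs : s ∈ Icc 0 (l1Dist q p)) :
    ∃ y ∈ segmentUnion c, y ∈ uIcc p q ∧ l1Dist y p = s := by
  obtain ⟨m, v, hv, rfl, rfl⟩ := exists_isMinimalWalk hT hp hq
  set S := segmentUnion c ∩ uIcc (v 0) (v m)
  have hvS : ∀ t ≤ m, v t ∈ connectedComponentIn S (v 0) := by
    intro t ht
    induction t with
    | zero => exact mem_connectedComponentIn ⟨hp, left_mem_uIcc⟩
    | succ t ih =>
      obtain ⟨k, h₁, h₂⟩ := hv.1 t ht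
      have hseg : segment ℝ (v t) (v (t + 1)) ⊆ S :=
        subset_inter (((convex_axisSegment c k).segment_subset h₁ h₂).trans (subset_iUnion _ k))
          ((convex_Icc _ _).segment_subset (hv.mem_uIcc (by omega)) (hv.mem_uIcc ht))
      rw [connectedComponentIn_eq (ih (by omega))]
      exact (convex_segment _ _).isPreconnected.subset_connectedComponentIn
        (left_mem_segment ℝ _ _) hseg (right_mem_segment ℝ _ _)
  obtain ⟨y, hyS, hy⟩ := isPreconnected_connectedComponentIn.intermediate_value
    (hvS 0 m.zero_le) (hvS m le_rfl)
    (continuous_l1Dist.comp (continuous_id.prodMk continuous_const)).continuousOn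
    (by rwa [Function.comp_apply, l1Dist_self])
  exact ⟨y, (connectedComponentIn_subset _ _ hyS).1, (connectedComponentIn_subset _ _ hyS).2, hy⟩

def IsGeodesicPoint (c : ι → ι → ℝ) (p q : ι → ℝ) (s : ℝ) (y : ι → ℝ) : Prop :=
  y ∈ segmentUnion c ∧ y ∈ uIcc p q ∧ l1Dist y p = s * l1Dist q p

lemma isGeodesicPoint_zero (hp : p ∈ segmentUnion c) : IsGeodesicPoint c p q 0 p :=
  ⟨hp, left_mem_uIcc, by rw [l1Dist_self, zero_mul]⟩

lemma isGeodesicPoint_one (hq : q ∈ segmentUnion c) : IsGeodesicPoint c p q 1 q :=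
  ⟨hq, right_mem_uIcc, (one_mul _).symm⟩

theorem existsUnique_isGeodesicPoint (hT : IsPreconnected (segmentUnion c))
    (hp : p ∈ segmentUnion c) (hq : q ∈ segmentUnion c) {s : ℝ} (hs : s ∈ Icc (0 : ℝ) 1) :
    ∃! y, IsGeodesicPoint c p q s y := by
  have hD : 0 ≤ l1Dist q p := Finset.sum_nonneg fun j _ => abs_nonneg _
  obtain ⟨y, hy, hyb, hys⟩ := exists_mem_uIcc_l1Dist_eq hT hp hq
    ⟨mul_nonneg hs.1 hD, mul_le_of_le_one_left hD hs.2⟩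
  exact ⟨y, ⟨hy, hyb, hys⟩, fun z ⟨hz, hzb, hzs⟩ =>
    eq_of_mem_uIcc_of_l1Dist_eq hT hp hq hz hy hzb hyb (hzs.trans hys.symm)⟩

lemma isClosed_setOf_isGeodesicPoint {X : Type*} [TopologicalSpace X] {c : X → ι → ι → ℝ}
    {p q y : X → ι → ℝ} {s : X → ℝ} (hc : Continuous c) (hp : Continuous p) (hq : Continuous q)
    (hs : Continuous s) (hy : Continuous y) :
    IsClosed {x | IsGeodesicPoint (c x) (p x) (q x) (s x) (y x)} := by
  have hl1 : ∀ {f g : X → ι → ℝ}, Continuous f → Continuous g →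
      Continuous fun x => l1Dist (f x) (g x) := fun hf hg => continuous_l1Dist.comp (hf.prodMk hg)
  have hinf : Continuous fun x => p x ⊓ q x :=
    continuous_pi fun j => ((continuous_apply j).comp hp).inf ((continuous_apply j).comp hq)
  have hsup : Continuous fun x => p x ⊔ q x :=
    continuous_pi fun j => ((continuous_apply j).comp hp).sup ((continuous_apply j).comp hq)
  exact (isClosed_setOf_mem_segmentUnion hy hc).inter
    (((isClosed_le hinf hy).inter (isClosed_le hy hsup)).inter
      (isClosed_eq (hl1 hy hp) (hs.mul (hl1 hq hp))))

end OrthogonalSegments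

open OrthogonalSegments

theorem orthogonal_segments_fibrewise_convex_general
    {A : Type} [TopologicalSpace A] (n : ℕ)
    (x : Fin n → Fin n → A → ℝ) (hx : ∀ i j, Continuous (x i j))
    (L : A → Fin n → Set (Fin n → ℝ))
    (hL : ∀ a i, L a i =
      {y | (∀ j, j ≠ i → y j = x i j a) ∧ y i ∈ Set.Icc (0 : ℝ) 1})
    (Q : A → Set (Fin n → ℝ)) (hQ : ∀ a, Q a = ⋃ i, L a i)
    (hconn : ∀ a, IsConnected (Q a)) :
    ∃ h : {t : A × (Fin n → ℝ) × (Fin n → ℝ) // t.2.1 ∈ Q t.1 ∧ t.2.2 ∈ Q t.1} × I →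
        (Fin n → ℝ),
      Continuous h ∧
      (∀ t s, h (t, s) ∈ Q t.1.1) ∧
      (∀ t, h (t, 0) = t.1.2.1) ∧
      (∀ t, h (t, 1) = t.1.2.2) := by
  set c : A → Fin n → Fin n → ℝ := fun a i j => x i j a
  have hQc : ∀ a, Q a = segmentUnion (c a) := fun a => by simp only [hQ, hL]; rfl
  have key : ∀ w : {t : A × (Fin n → ℝ) × (Fin n → ℝ) // t.2.1 ∈ Q t.1 ∧ t.2.2 ∈ Q t.1} × I,
      ∃! y, IsGeodesicPoint (c w.1.1.1) w.1.1.2.1 w.1.1.2.2 w.2 y := fun w =>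
    existsUnique_isGeodesicPoint (hQc _ ▸ hconn _).isPreconnected (hQc _ ▸ w.1.2.1)
      (hQc _ ▸ w.1.2.2) w.2.2
  choose h hh huniq using key
  refine ⟨h, ?_, fun w s => hQc _ ▸ (hh (w, s)).1,
    fun w => (huniq _ _ (isGeodesicPoint_zero (hQc _ ▸ w.2.1))).symm,
    fun w => (huniq _ _ (isGeodesicPoint_one (hQc _ ▸ w.2.2))).symm⟩
  have hgraph : {g : _ × (Fin n → ℝ) | g.2 = h g.1} =
      {g | IsGeodesicPoint (c g.1.1.1.1) g.1.1.1.2.1 g.1.1.1.2.2 g.1.2 g.2} :=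
    ext fun ⟨w, y⟩ => ⟨fun (hy : y = h w) => hy ▸ hh w, huniq w y⟩
  refine continuous_of_isClosed_graph_of_norm_le (r := fun w => max ‖w.1.1.2.1‖ ‖w.1.1.2.2‖)
    ?_ (by fun_prop) fun w => norm_le_max_of_mem_uIcc (hh w).2.1
  rw [hgraph]
  exact isClosed_setOf_isGeodesicPoint
    ((continuous_pi fun i => continuous_pi fun j => hx i j).comp (by fun_prop))
    (by fun_prop) (by fun_prop) (by fun_prop) continuous_snd

/-- A configuration of orthogonal line segments over a space `A` is fibrewise convex
(hence fibrewise contractible), provided each fibre is connected. -/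
theorem orthogonal_segments_fibrewise_convex
    {A : Type} [TopologicalSpace A] (n : ℕ) (hn : 1 ≤ n)
    (x : Fin n → Fin n → A → ℝ) (hx : ∀ i j, Continuous (x i j))
    (L : A → Fin n → Set (Fin n → ℝ))
    (hL : ∀ a i, L a i =
      {y | (∀ j, j ≠ i → y j = x i j a) ∧ y i ∈ Set.Icc (0 : ℝ) 1})
    (Q : A → Set (Fin n → ℝ)) (hQ : ∀ a, Q a = ⋃ i, L a i)
    (hconn : ∀ a, IsConnected (Q a)) :
    ∃ h : {t : A × (Fin n → ℝ) × (Fin n → ℝ) // t.2.1 ∈ Q t.1 ∧ t.2.2 ∈ Q t.1} × I →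
        (Fin n → ℝ),
      Continuous h ∧
      (∀ t s, h (t, s) ∈ Q t.1.1) ∧
      (∀ t, h (t, 0) = t.1.2.1) ∧
      (∀ t, h (t, 1) = t.1.2.2) :=
  orthogonal_segments_fibrewise_convex_general n x hx L hL Q hQ hconn
end

section
/- If Q = L_1 ∪ ⋯ ∪ L_n is connected, then Q is a contractible topological space. -/
/-!
Adding the segments one at a time, each new segment `L_i` meeting the union `U` of the earlier
ones (possible because the segments are closed and `Q` is connected), coordinate `i` is constant
on `U`: every earlier segment fixes it, so on the connected set `U` it takes finitely many values,
hence only one. Sliding coordinate `i` linearly to that value deformation retracts `L_i ∪ U`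
onto `U`, so contractibility propagates from one segment to all of `Q`.
-/

open Set Function

section ClosedCover

variable {X ι : Type*} [TopologicalSpace X] [DecidableEq ι] {A : ι → Set X}

theorem IsPreconnected.exists_mem_sdiff_inter_biUnion_nonempty (hA : ∀ i, IsClosed (A i))
    (hne : ∀ i, (A i).Nonempty) {S P : Finset ι} (hS : IsPreconnected (⋃ i ∈ S, A i))
    (hPS : P ⊂ S) (hP : P.Nonempty) : ∃ i ∈ S \ P, (A i ∩ ⋃ j ∈ P, A j).Nonempty := by
  by_contra h
  have hclosed : ∀ T : Finset ι, IsClosed (⋃ j ∈ T, A j) := fun T =>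
    T.finite_toSet.isClosed_biUnion fun j _ => hA j
  have hcover : ⋃ i ∈ S, A i = (⋃ j ∈ P, A j) ∪ ⋃ j ∈ S \ P, A j := by
    rw [← Finset.set_biUnion_union, Finset.union_sdiff_of_subset hPS.subset]
  obtain ⟨k, hk⟩ := hP
  obtain ⟨i, hi⟩ :=
    Finset.sdiff_nonempty.mpr (Finset.not_subset.mpr (Finset.exists_of_ssubset hPS))
  obtain ⟨y, -, hyP, hyS⟩ := isPreconnected_closed_iff.mp hS _ _ (hclosed P) (hclosed (S \ P))
    hcover.subset
    ((hne k).mono fun z hz => ⟨mem_biUnion (hPS.subset hk) hz, mem_biUnion hk hz⟩)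
    ((hne i).mono fun z hz => ⟨mem_biUnion (Finset.mem_sdiff.mp hi).1 hz, mem_biUnion hi hz⟩)
  obtain ⟨j, hj, hyj⟩ := mem_iUnion₂.mp hyS
  exact h ⟨j, hj, y, hyj, hyP⟩

theorem IsPreconnected.biUnion_induction (hA : ∀ i, IsClosed (A i)) (hne : ∀ i, (A i).Nonempty)
    {S : Finset ι} (hS : IsPreconnected (⋃ i ∈ S, A i)) (hSne : S.Nonempty)
    {p : Finset ι → Prop} (singleton : ∀ i ∈ S, p {i})
    (insert : ∀ P ⊆ S, ∀ i ∈ S \ P, p P → (A i ∩ ⋃ j ∈ P, A j).Nonempty →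
      p (insert i P)) :
    p S := by
  suffices h : ∀ m, 1 ≤ m → m ≤ S.card → ∃ P ⊆ S, P.card = m ∧ p P by
    obtain ⟨P, hPS, hcard, hP⟩ := h S.card hSne.card_pos le_rfl
    rwa [← Finset.eq_of_subset_of_card_le hPS hcard.ge]
  intro m hm
  induction m, hm using Nat.le_induction with
  | base =>
    obtain ⟨i, hi⟩ := hSne
    exact fun _ =>
      ⟨{i}, Finset.singleton_subset_iff.mpr hi, Finset.card_singleton i, singleton i hi⟩
  | succ m hm ih =>
    intro hmS
    obtain ⟨P, hPS, rfl, hP⟩ := ih (by omega)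
    obtain ⟨i, hi, hmeet⟩ := hS.exists_mem_sdiff_inter_biUnion_nonempty hA hne
      (hPS.ssubset_of_ne (by rintro rfl; omega)) (Finset.card_pos.mp (by omega))
    obtain ⟨hiS, hiP⟩ := Finset.mem_sdiff.mp hi
    exact ⟨_, Finset.insert_subset hiS hPS, Finset.card_insert_of_notMem hiP,
      insert P hPS i hi hP hmeet⟩

end ClosedCover

section AxisSegment

variable {ι : Type*}

def axisSegment (c : ι → ℝ) (i : ι) : Set (ι → ℝ) :=
  {y | (∀ j ≠ i, y j = c j) ∧ y i ∈ Icc 0 1}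

theorem isClosed_axisSegment (c : ι → ℝ) (i : ι) : IsClosed (axisSegment c i) := by
  simp only [axisSegment, ofPred_and, ofPred_forall]
  exact (isClosed_iInter fun j => isClosed_iInter fun _ =>
    isClosed_eq (continuous_apply j) continuous_const).inter
    (isClosed_Icc.preimage (continuous_apply i))

theorem apply_eq_of_isPreconnected_biUnion_axisSegment {x : ι → ι → ℝ} {P : Finset ι}
    {i : ι} (hi : i ∉ P) (hP : IsPreconnected (⋃ j ∈ P, axisSegment (x j) j))
    {y z : ι → ℝ} (hy : y ∈ ⋃ j ∈ P, axisSegment (x j) j)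
    (hz : z ∈ ⋃ j ∈ P, axisSegment (x j) j) :
    y i = z i := by
  set T := (fun w : ι → ℝ => w i) '' ⋃ j ∈ P, axisSegment (x j) j
  have hT : T.Finite := by
    refine (P.image fun j => x j i).finite_toSet.subset ?_
    rintro _ ⟨w, hw, rfl⟩
    obtain ⟨j, hj, hwj⟩ := mem_iUnion₂.mp hw
    exact Finset.mem_image.mpr ⟨j, hj, (hwj.1 i (ne_of_mem_of_not_mem hj hi).symm).symm⟩
  have hT' : T.Subsingleton := not_nontrivial_iff.mp fun h =>
    ((hP.image _ (continuous_apply i).continuousOn).infinite_of_nontrivial h) hT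
  exact hT' (mem_image_of_mem _ hy) (mem_image_of_mem _ hz)

variable [DecidableEq ι] {c p y : ι → ℝ} {i : ι}

theorem update_mem_axisSegment (hy : ∀ j ≠ i, y j = c j) {t : ℝ} (ht : t ∈ Icc 0 1) :
    update y i t ∈ axisSegment c i :=
  ⟨fun j hj => by rw [update_of_ne hj, hy j hj], by rwa [update_self]⟩

theorem axisSegment_nonempty (c : ι → ℝ) (i : ι) : (axisSegment c i).Nonempty :=
  ⟨_, update_mem_axisSegment (fun _ _ => rfl) (left_mem_Icc.mpr zero_le_one)⟩

theorem update_apply_eq_of_mem_axisSegment (hy : y ∈ axisSegment c i)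
    (hp : p ∈ axisSegment c i) : update y i (p i) = p := by
  ext j
  rcases eq_or_ne j i with rfl | hj
  · rw [update_self]
  · rw [update_of_ne hj, hy.1 j hj, hp.1 j hj]

theorem contractibleSpace_axisSegment_union {U : Set (ι → ℝ)} [ContractibleSpace U]
    (hpL : p ∈ axisSegment c i) (hpU : p ∈ U) (hU : ∀ y ∈ U, y i = p i) :
    ContractibleSpace ↥(axisSegment c i ∪ U) := by
  set V := axisSegment c i ∪ U
  have hUV : U ⊆ V := subset_union_right
  have update_eq_of_mem_U : ∀ y ∈ U, update y i (p i) = y := fun y hy => by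
    rw [← hU y hy, update_eq_self]
  have slide_mem :
      ∀ t ∈ Icc (0 : ℝ) 1, ∀ y ∈ V, update y i ((1 - t) * y i + t * p i) ∈ V := by
    rintro t ⟨ht₀, ht₁⟩ y (hy | hy)
    · exact .inl <| update_mem_axisSegment hy.1 <|
        convex_Icc (0 : ℝ) 1 hy.2 hpL.2 (sub_nonneg.mpr ht₁) ht₀ (sub_add_cancel 1 t)
    · rw [← hU y hy, ← add_mul, sub_add_cancel, one_mul, update_eq_self]
      exact hUV hy
  have retract_mem : ∀ y ∈ V, update y i (p i) ∈ U := by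
    rintro y (hy | hy)
    · rwa [update_apply_eq_of_mem_axisSegment hy hpL]
    · rwa [update_eq_of_mem_U y hy]
  let r : C(V, U) := ⟨fun y => ⟨update y i (p i), retract_mem y y.2⟩, by fun_prop⟩
  let slide : (ContinuousMap.id V).Homotopy ((ContinuousMap.inclusion hUV).comp r) :=
    { toFun := fun q => ⟨update q.2 i ((1 - q.1) * (q.2 : ι → ℝ) i + q.1 * p i),
        slide_mem q.1 q.1.2 q.2 q.2.2⟩
      continuous_toFun := by
        have : Continuous fun q : unitInterval × V => (q.2 : ι → ℝ) i :=
          (continuous_apply i).comp (by fun_prop)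
        fun_prop
      map_zero_left := fun y => by simp
      map_one_left := fun y => Subtype.ext (by simp [r]; rfl) }
  have r_inclusion : r.comp (ContinuousMap.inclusion hUV) = ContinuousMap.id U := by
    ext y j
    exact congrFun (update_eq_of_mem_U y y.2) j
  exact ContinuousMap.HomotopyEquiv.contractibleSpace
    { toFun := r
      invFun := ContinuousMap.inclusion hUV
      left_inv := ⟨slide.symm⟩
      right_inv := r_inclusion ▸ .refl _ }

theorem contractibleSpace_axisSegment (c : ι → ℝ) (i : ι) :
    ContractibleSpace (axisSegment c i) := by
  obtain ⟨p, hp⟩ := axisSegment_nonempty c i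
  have := contractibleSpace_axisSegment_union hp (mem_singleton p) fun y hy => by rw [hy]
  rwa [union_singleton, insert_eq_of_mem hp] at this

theorem contractibleSpace_biUnion_axisSegment {x : ι → ι → ℝ} {S : Finset ι}
    (hS : IsConnected (⋃ j ∈ S, axisSegment (x j) j)) :
    ContractibleSpace ↥(⋃ j ∈ S, axisSegment (x j) j) := by
  have hSne : S.Nonempty := by
    obtain ⟨j, hj, -⟩ := mem_iUnion₂.mp hS.nonempty.some_mem
    exact ⟨j, hj⟩
  refine hS.isPreconnected.biUnion_induction
    (p := fun P => ContractibleSpace ↥(⋃ j ∈ P, axisSegment (x j) j))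
    (fun j => isClosed_axisSegment (x j) j) (fun j => axisSegment_nonempty (x j) j) hSne
    (fun i _ => ?_) fun P _ i hi hP hmeet => ?_
  · rw [Finset.set_biUnion_singleton]
    exact contractibleSpace_axisSegment (x i) i
  · obtain ⟨p, hpL, hpP⟩ := hmeet
    have hPconn : IsPreconnected (⋃ j ∈ P, axisSegment (x j) j) :=
      (isConnected_iff_connectedSpace.mpr inferInstance).isPreconnected
    rw [Finset.set_biUnion_insert]
    exact contractibleSpace_axisSegment_union hpL hpP fun y hy =>
      apply_eq_of_isPreconnected_biUnion_axisSegment (Finset.mem_sdiff.mp hi).2 hPconn hy hpP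

end AxisSegment

theorem orthogonal_segments_contractible_general
    (n : ℕ) (x : Fin n → Fin n → ℝ)
    (L : Fin n → Set (Fin n → ℝ))
    (hL : ∀ i, L i = {y | (∀ j, j ≠ i → y j = x i j) ∧ y i ∈ Set.Icc (0 : ℝ) 1})
    (Q : Set (Fin n → ℝ)) (hQ : Q = ⋃ i, L i)
    (hconn : IsConnected Q) :
    ContractibleSpace Q := by
  obtain rfl : L = fun i => axisSegment (x i) i := funext hL
  have hQ' : Q = ⋃ j ∈ Finset.univ, axisSegment (x j) j := by simpa using hQ
  subst hQ'
  exact contractibleSpace_biUnion_axisSegment hconn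

/-- A connected configuration of axis-parallel unit segments `Q = L_1 ∪ ⋯ ∪ L_n ⊆ ℝⁿ`
is contractible. -/
theorem orthogonal_segments_contractible
    (n : ℕ) (hn : 1 ≤ n) (x : Fin n → Fin n → ℝ)
    (L : Fin n → Set (Fin n → ℝ))
    (hL : ∀ i, L i = {y | (∀ j, j ≠ i → y j = x i j) ∧ y i ∈ Set.Icc (0 : ℝ) 1})
    (Q : Set (Fin n → ℝ)) (hQ : Q = ⋃ i, L i)
    (hconn : IsConnected Q) :
    ContractibleSpace Q :=
  orthogonal_segments_contractible_general n x L hL Q hQ hconn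
end

section
/- The combined boundary map extends to a fibrewise open embedding of ⨆_{i=0}^{n} S¹ × [0,1) × fD°(n) into ℝfD°(n): there exists a continuous map e : {0,1,…,n} × S¹ × [0,1) × fD°(n) → ℂ with e(i,θ,s,a) ∈ |a| for all arguments, such that the map E(i,θ,s,a) = (a, e(i,θ,s,a)) into ℝfD°(n) is injective, is a homeomorphism onto an open subset of ℝfD°(n), and satisfies E(i,θ,0,a) = (a, ∂_i^a(θ)) for all i ∈ {0,1,…,n}, θ ∈ S¹ and a ∈ fD°(n). -/
/-- Ambient space of parameters for `n` framed little discs: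
centres, radii, framings. -/
abbrev Amb (n : ℕ) : Type := (Fin n → ℂ) × (Fin n → ℝ) × (Fin n → ℂ)

/-- The framed little discs operad space `fD(n)`: `n` disjoint framed little discs inside
the unit disc (the `i`-th little disc is `w ↦ zᵢ + rᵢαᵢw`). -/
def fD (n : ℕ) : Set (Amb n) :=
  {a | (∀ i, 0 < a.2.1 i) ∧ (∀ i, ‖a.1 i‖ + a.2.1 i ≤ 1) ∧
       (∀ i, ‖a.2.2 i‖ = 1) ∧
       ∀ i j, i ≠ j → a.2.1 i + a.2.1 j < ‖a.1 i - a.1 j‖}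

/-- `fD°(n)`: the subspace of `fD(n)` where the little discs avoid the boundary circle. -/
def fDo (n : ℕ) : Set (Amb n) :=
  {a | a ∈ fD n ∧ ∀ i, ‖a.1 i‖ + a.2.1 i < 1}

/-- The realization `|a|`: the closed unit disc minus the interiors of the little discs. -/
def realiz {n : ℕ} (a : Amb n) : Set ℂ :=
  {w | ‖w‖ ≤ 1 ∧ ∀ i, a.2.1 i ≤ ‖w - a.1 i‖}

/-- The boundary maps of `|a|`: `∂₀ = ∂_out` is the boundary of the big disc, and for
`i ≥ 1`, `∂ᵢ` is the boundary of the `i`-th little disc. -/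
def bdry {n : ℕ} (a : Amb n) (i : Fin (n + 1)) (θ : ℂ) : ℂ :=
  if h : i = 0 then θ
  else a.1 (i.pred h) + (a.2.1 (i.pred h) : ℂ) * a.2.2 (i.pred h) * θ

/-- The total space `ℝfD°(n)` of realizations over `fD°(n)`. -/
def RfDo (n : ℕ) : Set (↥(fDo n) × ℂ) :=
  {p | p.2 ∈ realiz (p.1 : Amb n)}

/-!
Every boundary circle of `|a|` gets a collar: the points of `|a|` at depth less than `margin a`
below it, where `margin a` is half the least clearance between two boundary circles (capped
at `1 / 2`), a positive continuous function on `fD°(n)`. Depth below a circle is 1-Lipschitz,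
so no point lies within `margin a` of two circles: the collars are disjoint, and a point at
depth less than `margin a` below one circle lies in `|a|`. On a collar, polar coordinates about
the centre of its circle (angle measured against the framing, depth rescaled by `margin a`)
invert the collar map continuously, so each collar map is an open embedding into `ℝfD°(n)`,
and the disjoint union of the `n + 1` collar maps is the required `E`.
-/

noncomputable section

namespace Amb

variable {n : ℕ}

/- Circle `0` is the outer boundary circle of `|a|` and circle `j.succ` the boundary of the
`j`-th little disc; `side i` is `-1` or `1` according as `|a|` lies inside or outside circle `i`. -/

def centre (a : Amb n) (i : Fin (n + 1)) : ℂ := (Fin.cons 0 a.1 : Fin (n + 1) → ℂ) i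

def radius (a : Amb n) (i : Fin (n + 1)) : ℝ := (Fin.cons 1 a.2.1 : Fin (n + 1) → ℝ) i

def frame (a : Amb n) (i : Fin (n + 1)) : ℂ := (Fin.cons 1 a.2.2 : Fin (n + 1) → ℂ) i

def side (i : Fin (n + 1)) : ℝ := if i = 0 then -1 else 1

/-- The signed distance from `w` to circle `i`, positive on the side of `|a|`. -/
def depth (a : Amb n) (i : Fin (n + 1)) (w : ℂ) : ℝ :=
  side i * (‖w - centre a i‖ - radius a i)

def collarMap (a : Amb n) (i : Fin (n + 1)) (θ : ℂ) (t : ℝ) : ℂ :=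
  centre a i + ((radius a i + side i * t : ℝ) : ℂ) * frame a i * θ

def collarAngle (a : Amb n) (i : Fin (n + 1)) (w : ℂ) : ℂ :=
  (w - centre a i) / (frame a i * (‖w - centre a i‖ : ℂ))

lemma side_mul_self (i : Fin (n + 1)) : side i * side i = 1 := by
  unfold side; split_ifs <;> norm_num

lemma norm_frame {a : Amb n} (ha : a ∈ fD n) (i : Fin (n + 1)) : ‖frame a i‖ = 1 := by
  cases i using Fin.cases with
  | zero => simp [frame]
  | succ j => simpa [frame] using ha.2.2.1 j

lemma norm_sub_centre (a : Amb n) (i : Fin (n + 1)) (w : ℂ) :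
    ‖w - centre a i‖ = radius a i + side i * depth a i w := by
  rw [depth, ← mul_assoc, side_mul_self]; ring

lemma collarMap_zero (a : Amb n) (i : Fin (n + 1)) (θ : ℂ) :
    collarMap a i θ 0 = bdry a i θ := by
  cases i using Fin.cases <;> simp [collarMap, bdry, centre, radius, frame]

lemma mem_realiz_iff {a : Amb n} {w : ℂ} : w ∈ realiz a ↔ ∀ i, 0 ≤ depth a i w := by
  simp [Fin.forall_fin_succ, realiz, depth, side, centre, radius]

lemma depth_sub_depth_le (a : Amb n) (i : Fin (n + 1)) (v w : ℂ) :
    depth a i v - depth a i w ≤ ‖v - w‖ := by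
  have h := abs_norm_sub_norm_le (v - centre a i) (w - centre a i)
  rw [sub_sub_sub_cancel_right] at h
  unfold depth side
  split_ifs <;> linarith [abs_le.1 h]

@[fun_prop]
lemma continuous_centre (i : Fin (n + 1)) : Continuous fun a : Amb n => centre a i := by
  cases i using Fin.cases <;> simp only [centre, Fin.cons_zero, Fin.cons_succ] <;> fun_prop

@[fun_prop]
lemma continuous_radius (i : Fin (n + 1)) : Continuous fun a : Amb n => radius a i := by
  cases i using Fin.cases <;> simp only [radius, Fin.cons_zero, Fin.cons_succ] <;> fun_prop

@[fun_prop]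
lemma continuous_frame (i : Fin (n + 1)) : Continuous fun a : Amb n => frame a i := by
  cases i using Fin.cases <;> simp only [frame, Fin.cons_zero, Fin.cons_succ] <;> fun_prop

@[fun_prop]
lemma continuous_depth (i : Fin (n + 1)) :
    Continuous fun p : Amb n × ℂ => depth p.1 i p.2 := by
  unfold depth; fun_prop

def clearance (a : Amb n) (i : Fin (n + 1)) (j : Fin n) : ℝ := depth a i (a.1 j) - a.2.1 j

/- The index `none` caps the margin at `1 / 2`; the pairs `(j.succ, j)`, which compare a circle
with itself, are skipped. -/
def margin (a : Amb n) : ℝ :=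
  (Finset.univ.inf' Finset.univ_nonempty fun p : Option (Fin (n + 1) × Fin n) =>
    p.elim 1 fun q => if q.1 = q.2.succ then 1 else clearance a q.1 q.2) / 2

lemma clearance_le_depth_add_depth (a : Amb n) (i : Fin (n + 1)) (j : Fin n) (w : ℂ) :
    clearance a i j ≤ depth a i w + depth a j.succ w := by
  have hj : depth a j.succ w = ‖w - a.1 j‖ - a.2.1 j := by simp [depth, side, centre, radius]
  have := depth_sub_depth_le a i (a.1 j) w
  rw [clearance, hj, norm_sub_rev]
  linarith

lemma clearance_pos {a : Amb n} (ha : a ∈ fDo n) {i : Fin (n + 1)} {j : Fin n}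
    (hij : i ≠ j.succ) : 0 < clearance a i j := by
  cases i using Fin.cases with
  | zero =>
    simp only [clearance, depth, side, centre, radius, if_pos, Fin.cons_zero, sub_zero]
    linarith [ha.2 j]
  | succ k =>
    have hkj : k ≠ j := fun h => hij (h ▸ rfl)
    simp only [clearance, depth, side, centre, radius, Fin.succ_ne_zero, if_false,
      Fin.cons_succ, one_mul]
    linarith [ha.1.2.2.2 j k hkj.symm, norm_sub_rev (a.1 j) (a.1 k)]

lemma margin_pos {a : Amb n} (ha : a ∈ fDo n) : 0 < margin a := by
  refine half_pos ((Finset.lt_inf'_iff _).2 fun p _ => ?_)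
  rcases p with _ | ⟨i, j⟩
  · exact one_pos
  · dsimp only [Option.elim]
    split_ifs with h
    exacts [one_pos, clearance_pos ha h]

lemma margin_lt_one (a : Amb n) : margin a < 1 := by
  have : margin a ≤ 1 / 2 := by
    rw [margin, div_le_div_iff_of_pos_right two_pos]
    exact Finset.inf'_le _ (Finset.mem_univ none)
  linarith

lemma two_margin_le_clearance (a : Amb n) {i : Fin (n + 1)} {j : Fin n} (hij : i ≠ j.succ) :
    2 * margin a ≤ clearance a i j := by
  rw [margin, mul_div_cancel₀ _ two_ne_zero]
  exact (Finset.inf'_le _ (Finset.mem_univ (some (i, j)))).trans_eq (if_neg hij)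

lemma two_margin_le_depth_add_depth (a : Amb n) {i k : Fin (n + 1)} (hik : i ≠ k) (w : ℂ) :
    2 * margin a ≤ depth a i w + depth a k w := by
  rcases Fin.eq_zero_or_eq_succ k with rfl | ⟨j, rfl⟩
  · obtain ⟨j, rfl⟩ := Fin.exists_succ_eq.2 hik
    linarith [two_margin_le_clearance a (Fin.succ_ne_zero j).symm,
      clearance_le_depth_add_depth a 0 j w]
  · linarith [two_margin_le_clearance a hik, clearance_le_depth_add_depth a i j w]

@[fun_prop]
lemma continuous_margin : Continuous (margin : Amb n → ℝ) := by
  refine (Continuous.finset_inf'_apply _ fun p _ => ?_).div_const _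
  rcases p with _ | ⟨i, j⟩
  · exact continuous_const
  · dsimp only [Option.elim]
    split_ifs
    · exact continuous_const
    · exact ((continuous_depth i).comp (by fun_prop : Continuous fun a : Amb n => (a, a.1 j))).sub
        (by fun_prop)

section collar

variable {a : Amb n} {i : Fin (n + 1)} {θ w : ℂ} {t : ℝ}

lemma radius_add_side_mul_pos (ha : a ∈ fD n) (ht0 : 0 ≤ t) (ht1 : t < 1) :
    0 < radius a i + side i * t := by
  cases i using Fin.cases with
  | zero => simp only [radius, side, Fin.cons_zero, if_pos]; linarith
  | succ j =>
    simp only [radius, side, Fin.cons_succ, Fin.succ_ne_zero, if_false]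
    linarith [ha.1 j]

lemma norm_collarMap_sub_centre (ha : a ∈ fD n) (hθ : ‖θ‖ = 1)
    (ht : 0 < radius a i + side i * t) :
    ‖collarMap a i θ t - centre a i‖ = radius a i + side i * t := by
  rw [collarMap, add_sub_cancel_left, norm_mul, norm_mul, norm_frame ha, hθ, Complex.norm_real,
    Real.norm_of_nonneg ht.le, mul_one, mul_one]

lemma depth_collarMap (ha : a ∈ fD n) (hθ : ‖θ‖ = 1) (ht : 0 < radius a i + side i * t) :
    depth a i (collarMap a i θ t) = t := by
  rw [depth, norm_collarMap_sub_centre ha hθ ht, add_sub_cancel_left, ← mul_assoc,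
    side_mul_self, one_mul]

lemma frame_ne_zero (ha : a ∈ fD n) : frame a i ≠ 0 :=
  norm_ne_zero_iff.1 ((norm_frame ha i).trans_ne one_ne_zero)

lemma collarAngle_collarMap (ha : a ∈ fD n) (hθ : ‖θ‖ = 1)
    (ht : 0 < radius a i + side i * t) :
    collarAngle a i (collarMap a i θ t) = θ := by
  have hr : ((radius a i + side i * t : ℝ) : ℂ) ≠ 0 := Complex.ofReal_ne_zero.2 ht.ne'
  rw [collarAngle, norm_collarMap_sub_centre ha hθ ht, collarMap, add_sub_cancel_left]
  field_simp [frame_ne_zero ha]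

lemma collarMap_collarAngle (ha : a ∈ fD n) (hw : w ≠ centre a i) :
    collarMap a i (collarAngle a i w) (depth a i w) = w := by
  have hr : ((‖w - centre a i‖ : ℝ) : ℂ) ≠ 0 := by simpa [sub_eq_zero] using hw
  rw [collarMap, collarAngle, ← norm_sub_centre]
  field_simp [frame_ne_zero ha]
  ring

lemma norm_collarAngle (ha : a ∈ fD n) (hw : w ≠ centre a i) : ‖collarAngle a i w‖ = 1 := by
  have hr : ‖w - centre a i‖ ≠ 0 := by simpa [sub_eq_zero] using hw
  rw [collarAngle, norm_div, norm_mul, norm_frame ha, Complex.norm_real, norm_norm, one_mul,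
    div_self hr]

lemma ne_centre_of_depth_nonneg_of_lt_one (ha : a ∈ fD n) (h0 : 0 ≤ depth a i w)
    (h1 : depth a i w < 1) : w ≠ centre a i := by
  rintro rfl
  have := radius_add_side_mul_pos (i := i) ha h0 h1
  rw [← norm_sub_centre, sub_self, norm_zero] at this
  exact lt_irrefl 0 this

lemma collarMap_mem_realiz (ha : a ∈ fDo n) (hθ : ‖θ‖ = 1) (ht0 : 0 ≤ t)
    (ht : t < margin a) : collarMap a i θ t ∈ realiz a := by
  have hdepth : depth a i (collarMap a i θ t) = t :=
    depth_collarMap ha.1 hθ (radius_add_side_mul_pos ha.1 ht0 (ht.trans (margin_lt_one a)))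
  refine mem_realiz_iff.2 fun k => ?_
  rcases eq_or_ne k i with rfl | hki
  · rw [hdepth]; exact ht0
  · linarith [two_margin_le_depth_add_depth a hki (collarMap a i θ t)]

lemma eq_of_depth_lt_margin {k : Fin (n + 1)} (hi : depth a i w < margin a)
    (hk : depth a k w < margin a) : i = k := by
  by_contra hik
  linarith [two_margin_le_depth_add_depth a hik w]

end collar

end Amb

open Topology in
lemma isOpenEmbedding_prod_of_discrete_left {ι Y Z : Type*} [TopologicalSpace ι]
    [DiscreteTopology ι] [TopologicalSpace Y] [TopologicalSpace Z] {f : ι × Y → Z}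
    (hf : ∀ i, IsOpenEmbedding (f ⟨i, ·⟩))
    (hdisj : ∀ i j y y', f (i, y) = f (j, y') → i = j) :
    IsOpenEmbedding f := by
  refine .of_continuous_injective_isOpenMap
    (continuous_prod_of_discrete_left.2 fun i => (hf i).continuous) ?_
    (isOpenMap_prod_of_discrete_left.2 fun i => (hf i).isOpenMap)
  rintro ⟨i, y⟩ ⟨j, y'⟩ h
  obtain rfl := hdisj i j y y' h
  rw [(hf i).injective h]

namespace RfDo

open Amb

variable {n : ℕ}

abbrev CollarParam (n : ℕ) : Type :=
  Metric.sphere (0 : ℂ) 1 × Set.Ico (0 : ℝ) 1 × fDo n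

lemma mul_margin_mem_Ico (s : Set.Ico (0 : ℝ) 1) (a : fDo n) :
    (s : ℝ) * margin (a : Amb n) ∈ Set.Ico 0 (margin (a : Amb n)) :=
  ⟨mul_nonneg s.2.1 (margin_pos a.2).le, mul_lt_of_lt_one_left (margin_pos a.2) s.2.2⟩

def collarEmbedding (i : Fin (n + 1)) (x : CollarParam n) : RfDo n :=
  ⟨(x.2.2, collarMap (x.2.2 : Amb n) i x.1 (x.2.1 * margin (x.2.2 : Amb n))),
    collarMap_mem_realiz x.2.2.2 (norm_eq_of_mem_sphere x.1)
      (mul_margin_mem_Ico x.2.1 x.2.2).1 (mul_margin_mem_Ico x.2.1 x.2.2).2⟩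

def collar (i : Fin (n + 1)) : Set (RfDo n) :=
  {q | depth (q.1.1 : Amb n) i q.1.2 < margin (q.1.1 : Amb n)}

lemma isOpen_collar (i : Fin (n + 1)) : IsOpen (collar (n := n) i) := by
  have hq : Continuous fun q : RfDo n => ((q.1.1 : Amb n), q.1.2) := by fun_prop
  exact isOpen_lt ((continuous_depth i).comp hq) (continuous_margin.comp (continuous_fst.comp hq))

lemma depth_collarEmbedding (i : Fin (n + 1)) (x : CollarParam n) :
    depth (x.2.2 : Amb n) i (collarEmbedding i x).1.2 = x.2.1 * margin (x.2.2 : Amb n) :=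
  depth_collarMap x.2.2.2.1 (norm_eq_of_mem_sphere x.1)
    (radius_add_side_mul_pos x.2.2.2.1 (mul_margin_mem_Ico x.2.1 x.2.2).1
      ((mul_margin_mem_Ico x.2.1 x.2.2).2.trans (margin_lt_one _)))

lemma collarEmbedding_mem_collar (i : Fin (n + 1)) (x : CollarParam n) :
    collarEmbedding i x ∈ collar i :=
  (depth_collarEmbedding i x).trans_lt (mul_margin_mem_Ico x.2.1 x.2.2).2

lemma ne_centre_of_mem_collar (i : Fin (n + 1)) (q : collar (n := n) i) :
    q.1.1.2 ≠ centre (q.1.1.1 : Amb n) i := by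
  have hq : depth (q.1.1.1 : Amb n) i q.1.1.2 < margin (q.1.1.1 : Amb n) := q.2
  exact ne_centre_of_depth_nonneg_of_lt_one q.1.1.1.2.1 (mem_realiz_iff.1 q.1.2 i)
    (hq.trans (margin_lt_one _))

def collarCoord (i : Fin (n + 1)) (q : collar (n := n) i) : CollarParam n :=
  (⟨collarAngle (q.1.1.1 : Amb n) i q.1.1.2, by
      simp [norm_collarAngle q.1.1.1.2.1 (ne_centre_of_mem_collar i q)]⟩,
    ⟨depth (q.1.1.1 : Amb n) i q.1.1.2 / margin (q.1.1.1 : Amb n),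
      div_nonneg (mem_realiz_iff.1 q.1.2 i) (margin_pos q.1.1.1.2).le,
      (div_lt_one (margin_pos q.1.1.1.2)).2 q.2⟩,
    q.1.1.1)

lemma continuous_collarEmbedding (i : Fin (n + 1)) :
    Continuous (collarEmbedding (n := n) i) := by
  refine Continuous.subtype_mk (Continuous.prodMk (by fun_prop) ?_) _
  unfold collarMap
  fun_prop

lemma continuous_collarCoord (i : Fin (n + 1)) : Continuous (collarCoord (n := n) i) := by
  have ha : Continuous fun q : collar (n := n) i => (q.1.1.1 : Amb n) := by fun_prop
  have hw : Continuous fun q : collar (n := n) i => q.1.1.2 := by fun_prop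
  refine .prodMk (.subtype_mk ?_ _) (.prodMk (.subtype_mk ?_ _) (by fun_prop))
  · unfold collarAngle
    refine .div (by fun_prop) (by fun_prop) fun q => ?_
    exact mul_ne_zero (frame_ne_zero q.1.1.1.2.1) (Complex.ofReal_ne_zero.2
      (norm_ne_zero_iff.2 (sub_ne_zero.2 (ne_centre_of_mem_collar i q))))
  · exact ((continuous_depth i).comp (ha.prodMk hw)).div (by fun_prop)
      fun q => (margin_pos q.1.1.1.2).ne'

def collarHomeomorph (i : Fin (n + 1)) : CollarParam n ≃ₜ collar (n := n) i where
  toFun x := ⟨collarEmbedding i x, collarEmbedding_mem_collar i x⟩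
  invFun := collarCoord i
  left_inv x := by
    have hρ := radius_add_side_mul_pos (i := i) x.2.2.2.1 (mul_margin_mem_Ico x.2.1 x.2.2).1
      ((mul_margin_mem_Ico x.2.1 x.2.2).2.trans (margin_lt_one _))
    refine Prod.ext (Subtype.ext ?_) (Prod.ext (Subtype.ext ?_) rfl)
    · exact collarAngle_collarMap x.2.2.2.1 (norm_eq_of_mem_sphere x.1) hρ
    · exact (congrArg (· / _) (depth_collarEmbedding i x)).trans
        (mul_div_cancel_right₀ _ (margin_pos x.2.2.2).ne')
  right_inv q := by
    refine Subtype.ext (Subtype.ext (Prod.ext rfl ?_))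
    change collarMap (q.1.1.1 : Amb n) i (collarAngle (q.1.1.1 : Amb n) i q.1.1.2)
      (depth (q.1.1.1 : Amb n) i q.1.1.2 / margin (q.1.1.1 : Amb n) * margin (q.1.1.1 : Amb n))
      = q.1.1.2
    rw [div_mul_cancel₀ _ (margin_pos q.1.1.1.2).ne']
    exact collarMap_collarAngle q.1.1.1.2.1 (ne_centre_of_mem_collar i q)
  continuous_toFun := (continuous_collarEmbedding i).subtype_mk _
  continuous_invFun := continuous_collarCoord i

open Topology in
lemma isOpenEmbedding_collarEmbedding (i : Fin (n + 1)) :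
    IsOpenEmbedding (collarEmbedding (n := n) i) :=
  (isOpen_collar i).isOpenEmbedding_subtypeVal.comp (collarHomeomorph i).isOpenEmbedding

lemma eq_of_collarEmbedding_eq {i k : Fin (n + 1)} {x y : CollarParam n}
    (h : collarEmbedding i x = collarEmbedding k y) : i = k :=
  eq_of_depth_lt_margin (collarEmbedding_mem_collar i x) (h ▸ collarEmbedding_mem_collar k y)

end RfDo

end

/-- The combined boundary map extends to a fibrewise open embedding
`⨆_{i=0}^{n} S¹ × [0,1) × fD°(n) ↪ ℝfD°(n)`. -/
theorem boundary_extends_to_open_embedding (n : ℕ) :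
    ∃ E : Fin (n + 1) × ↥(Metric.sphere (0 : ℂ) 1) × ↥(Set.Ico (0 : ℝ) 1) × ↥(fDo n) →
        ↥(RfDo n),
      Topology.IsOpenEmbedding E ∧
      (∀ i θ s a, ((E (i, θ, s, a) : ↥(fDo n) × ℂ)).1 = a) ∧
      (∀ i θ a, ((E (i, θ, ⟨0, le_refl 0, one_pos⟩, a) : ↥(fDo n) × ℂ)).2 =
        bdry (a : Amb n) i (θ : ℂ)) := by
  refine ⟨fun x => RfDo.collarEmbedding x.1 x.2, ?_, fun _ _ _ _ => rfl, fun i θ a => ?_⟩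
  · exact isOpenEmbedding_prod_of_discrete_left RfDo.isOpenEmbedding_collarEmbedding
      fun _ _ _ _ => RfDo.eq_of_collarEmbedding_eq
  · exact (congrArg _ (zero_mul _)).trans (Amb.collarMap_zero _ i θ)
end

section
/- Let z ∈ ℂ, ρ > 0 and α ∈ S¹ satisfy |z| + ρ < 1. Then the map S¹ × [0,1] → ℂ given by (θ, r) ↦ (1−r)(z + ρ α θ) + r α θ is a homeomorphism onto the annular region {w ∈ ℂ : |w| ≤ 1 and |w − z| ≥ ρ}. -/
/-!
Write `s r = (1 - r) ρ + r`. The point with parameters `(θ, r)` is `(1 - r) z + s r α θ`, so the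
slice `r` is the circle of centre `(1 - r) z` and radius `s r`, from `∂(z, ρ)` at `r = 0` to the
unit circle at `r = 1`. Since `‖z‖ < 1 - ρ`, the centre moves strictly slower than the radius
grows, so for fixed `w` the signed distance `‖w - (1 - r) z‖ - s r` is strictly decreasing in `r`.
Hence each `w` lies on at most one circle of the family (injectivity), and it lies on one with
`r ∈ [0, 1]` exactly when the signed distance changes sign on `[0, 1]` (intermediate value
theorem), which is the annulus condition. Compactness of `S¹ × [0, 1]` turns the continuous
injection into an embedding.
-/

open Set Metric

theorem strictAnti_norm_sub_smul_sub {E : Type*} [SeminormedAddCommGroup E] [NormedSpace ℝ E]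
    (w z : E) {ρ : ℝ} (hin : ‖z‖ + ρ < 1) :
    StrictAnti fun r : ℝ => ‖w - (1 - r) • z‖ - ((1 - r) * ρ + r) := by
  intro r₁ r₂ hr
  have hmove : ‖w - (1 - r₂) • z‖ ≤ ‖w - (1 - r₁) • z‖ + (r₂ - r₁) * ‖z‖ :=
    calc ‖w - (1 - r₂) • z‖ = ‖(w - (1 - r₁) • z) + (r₂ - r₁) • z‖ := by congr 1; module
      _ ≤ ‖w - (1 - r₁) • z‖ + ‖(r₂ - r₁) • z‖ := norm_add_le _ _
      _ = ‖w - (1 - r₁) • z‖ + (r₂ - r₁) * ‖z‖ := by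
        rw [norm_smul, Real.norm_of_nonneg (sub_nonneg.2 hr.le)]
  nlinarith

theorem exists_mem_unitSphere_mul_eq_iff {𝕜 : Type*} [NormedDivisionRing 𝕜] (a v : 𝕜) :
    (∃ θ ∈ sphere (0 : 𝕜) 1, a * θ = v) ↔ ‖v‖ = ‖a‖ := by
  constructor
  · rintro ⟨θ, hθ, rfl⟩
    rw [norm_mul, mem_sphere_zero_iff_norm.1 hθ, mul_one]
  · intro hv
    rcases eq_or_ne a 0 with rfl | ha
    · exact ⟨1, by simp, by simpa using (norm_eq_zero.1 (hv.trans norm_zero)).symm⟩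
    · refine ⟨a⁻¹ * v, ?_, mul_inv_cancel_left₀ ha v⟩
      rw [mem_sphere_zero_iff_norm, norm_mul, norm_inv, hv, inv_mul_cancel₀ (norm_ne_zero_iff.2 ha)]

theorem annulus_param_radius_pos {ρ : ℝ} (hρ : 0 < ρ) {r : ℝ} (hr : r ∈ Icc (0 : ℝ) 1) :
    0 < (1 - r) * ρ + r := by
  rcases hr.1.eq_or_lt with rfl | hr₀
  · simpa using hρ
  · nlinarith [mul_nonneg (sub_nonneg.2 hr.2) hρ.le]

noncomputable def annulusParam (z α : ℂ) (ρ : ℝ) (p : ℂ × ℝ) : ℂ :=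
  (1 - p.2) • z + (((1 - p.2) * ρ + p.2 : ℝ) * α) * p.1

section annulusParam

variable {z α : ℂ} {ρ : ℝ}

theorem annulusParam_apply (z α θ : ℂ) (ρ r : ℝ) :
    annulusParam z α ρ (θ, r) = (1 - (r : ℂ)) * (z + ρ * α * θ) + r * α * θ := by
  rw [annulusParam, Complex.real_smul]
  push_cast
  ring

theorem continuous_annulusParam (z α : ℂ) (ρ : ℝ) : Continuous (annulusParam z α ρ) := by
  unfold annulusParam
  fun_prop

theorem exists_annulusParam_eq_iff (hα : ‖α‖ = 1) (hρ : 0 < ρ) {r : ℝ} (hr : r ∈ Icc (0 : ℝ) 1)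
    (w : ℂ) : (∃ θ ∈ sphere (0 : ℂ) 1, annulusParam z α ρ (θ, r) = w) ↔
      ‖w - (1 - r) • z‖ - ((1 - r) * ρ + r) = 0 := by
  simp_rw [annulusParam, ← eq_sub_iff_add_eq']
  rw [exists_mem_unitSphere_mul_eq_iff, sub_eq_zero, norm_mul, hα, mul_one, Complex.norm_real,
    Real.norm_of_nonneg (annulus_param_radius_pos hρ hr).le]

theorem injOn_annulusParam (hα : ‖α‖ = 1) (hρ : 0 < ρ) (hin : ‖z‖ + ρ < 1) :
    InjOn (annulusParam z α ρ) (sphere (0 : ℂ) 1 ×ˢ Icc 0 1) := by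
  rintro ⟨θ₁, r₁⟩ ⟨hθ₁ : θ₁ ∈ sphere 0 1, hr₁ : r₁ ∈ Icc 0 1⟩
    ⟨θ₂, r₂⟩ ⟨hθ₂ : θ₂ ∈ sphere 0 1, hr₂ : r₂ ∈ Icc 0 1⟩ h
  set w := annulusParam z α ρ (θ₂, r₂)
  have h₁ := (exists_annulusParam_eq_iff hα hρ hr₁ w).1 ⟨θ₁, hθ₁, h⟩
  have h₂ := (exists_annulusParam_eq_iff hα hρ hr₂ w).1 ⟨θ₂, hθ₂, rfl⟩
  obtain rfl : r₁ = r₂ := (strictAnti_norm_sub_smul_sub _ z hin).injective (h₁.trans h₂.symm)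
  have hscale : (((1 - r₁) * ρ + r₁ : ℝ) : ℂ) * α ≠ 0 :=
    mul_ne_zero (Complex.ofReal_ne_zero.2 (annulus_param_radius_pos hρ hr₁).ne')
      (norm_ne_zero_iff.1 (by rw [hα]; exact one_ne_zero))
  exact Prod.ext (mul_left_cancel₀ hscale (add_left_cancel h)) rfl

theorem image_annulusParam (hα : ‖α‖ = 1) (hρ : 0 < ρ) (hin : ‖z‖ + ρ < 1) :
    annulusParam z α ρ '' (sphere (0 : ℂ) 1 ×ˢ Icc 0 1) = {w : ℂ | ‖w‖ ≤ 1 ∧ ρ ≤ ‖w - z‖} := by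
  ext w
  set φ : ℝ → ℝ := fun r => ‖w - (1 - r) • z‖ - ((1 - r) * ρ + r)
  have hφ : φ '' Icc 0 1 = Icc (φ 1) (φ 0) :=
    ((by fun_prop : Continuous φ).continuousOn).image_Icc_of_antitoneOn zero_le_one
      ((strictAnti_norm_sub_smul_sub w z hin).antitone.antitoneOn _)
  calc w ∈ _ ↔ ∃ r ∈ Icc (0 : ℝ) 1, ∃ θ ∈ sphere (0 : ℂ) 1, annulusParam z α ρ (θ, r) = w := by
        simp only [mem_image, mem_prod, Prod.exists]
        tauto
    _ ↔ 0 ∈ φ '' Icc 0 1 := by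
        simp only [mem_image, φ]
        exact exists_congr fun r => and_congr_right fun hr => exists_annulusParam_eq_iff hα hρ hr w
    _ ↔ _ := by
        rw [hφ]
        simp [φ, and_comm]

end annulusParam

/-- For a single framed little disc (centre `z`, radius `ρ`, framing `α`) strictly inside
the unit disc, the map `S¹ × [0,1] → ℂ`, `(θ, r) ↦ (1−r)(z + ραθ) + rαθ`, is a
homeomorphism onto the annular region `{w : |w| ≤ 1, |w − z| ≥ ρ}`. -/
theorem annulus_parametrization_isEmbedding
    (z α : ℂ) (ρ : ℝ) (hρ : 0 < ρ) (hα : ‖α‖ = 1)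
    (hin : ‖z‖ + ρ < 1)
    (f : ↥(Metric.sphere (0 : ℂ) 1) × ↥(Set.Icc (0 : ℝ) 1) → ℂ)
    (hf : ∀ (θ : ↥(Metric.sphere (0 : ℂ) 1)) (r : ↥(Set.Icc (0 : ℝ) 1)),
      f (θ, r) = (1 - ((r : ℝ) : ℂ)) * (z + (ρ : ℂ) * α * (θ : ℂ)) +
        ((r : ℝ) : ℂ) * α * (θ : ℂ)) :
    Topology.IsEmbedding f ∧
      Set.range f = {w : ℂ | ‖w‖ ≤ 1 ∧ ρ ≤ ‖w - z‖} := by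
  set ι : sphere (0 : ℂ) 1 × Icc (0 : ℝ) 1 → ℂ × ℝ := Prod.map Subtype.val Subtype.val
  have hf' : f = annulusParam z α ρ ∘ ι := by
    funext ⟨θ, r⟩
    exact (hf θ r).trans (annulusParam_apply z α θ ρ r).symm
  have hι : range ι = sphere 0 1 ×ˢ Icc 0 1 := by
    rw [range_prodMap, Subtype.range_coe, Subtype.range_coe]
  have hinj : Function.Injective (annulusParam z α ρ ∘ ι) :=
    ((injOn_annulusParam hα hρ hin).injective_iff _ hι.le).2
      (Subtype.val_injective.prodMap Subtype.val_injective)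
  have hcont : Continuous (annulusParam z α ρ ∘ ι) :=
    (continuous_annulusParam z α ρ).comp (continuous_subtype_val.prodMap continuous_subtype_val)
  rw [hf']
  exact ⟨(hcont.isClosedEmbedding hinj).isEmbedding,
    by rw [range_comp, hι, image_annulusParam hα hρ hin]⟩
end

section
/- (i) The operation ⋄ on (F_n)ⁿ defined by (v ⋄ w)_i = α(v)(w_i)·v_i is associative, and α(v ⋄ w) = α(v)∘α(w) for all v, w ∈ (F_n)ⁿ. (ii) The set W_n is a group under ⋄: the constant tuple (1,…,1) lies in W_n and is a two-sided identity, W_n is closed under ⋄, and every element of W_n has a two-sided ⋄-inverse lying in W_n. -/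
/-- For a tuple `w ∈ (F_n)ⁿ`, the endomorphism `α(w)` of the free group `F_n` determined
by `α(w)(xᵢ) = wᵢ xᵢ wᵢ⁻¹`. -/
def alphaHom (n : ℕ) (w : Fin n → FreeGroup (Fin n)) :
    FreeGroup (Fin n) →* FreeGroup (Fin n) :=
  FreeGroup.lift fun i => w i * FreeGroup.of i * (w i)⁻¹

/-- The operation `⋄` on `(F_n)ⁿ`: `(v ⋄ w)ᵢ = α(v)(wᵢ)·vᵢ`. -/
def diamond {n : ℕ} (v w : Fin n → FreeGroup (Fin n)) : Fin n → FreeGroup (Fin n) :=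
  fun i => alphaHom n v (w i) * v i

/-- The word `x₁ x₂ ⋯ xₙ` in `F_n`. -/
def fullWord (n : ℕ) : FreeGroup (Fin n) :=
  (List.ofFn (FreeGroup.of : Fin n → FreeGroup (Fin n))).prod

/-- `W_n`: tuples `w` with `α(w)` bijective and fixing `x₁ x₂ ⋯ xₙ`. -/
def Wset (n : ℕ) : Set (Fin n → FreeGroup (Fin n)) :=
  {w | Function.Bijective (alphaHom n w) ∧ alphaHom n w (fullWord n) = fullWord n}

/-!
Both parts rest on the identity `α(v ⋄ w) = α(v) ∘ α(w)`, which only has to be checked on the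
generators: `α(v)(wᵢ xᵢ wᵢ⁻¹)` becomes `(α(v)(wᵢ) vᵢ) xᵢ (α(v)(wᵢ) vᵢ)⁻¹`. Associativity of `⋄`
follows by applying it to the first factor, and `W_n` is closed under `⋄` because bijective maps
fixing `x₁ ⋯ xₙ` are closed under composition. For `w ∈ W_n` the tuple
`vᵢ = (α(w)⁻¹(wᵢ))⁻¹` satisfies `w ⋄ v = 1`; hence `α(w) ∘ α(v) = id`, so `α(v) = α(w)⁻¹`,
which in turn gives `v ⋄ w = 1` and `v ∈ W_n`.
-/

namespace Wset

variable {n : ℕ}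

@[simp]
lemma alphaHom_of (w : Fin n → FreeGroup (Fin n)) (i : Fin n) :
    alphaHom n w (FreeGroup.of i) = w i * FreeGroup.of i * (w i)⁻¹ :=
  FreeGroup.lift_apply_of

lemma alphaHom_one : alphaHom n (fun _ => 1) = MonoidHom.id _ := by
  ext i
  simp

lemma alphaHom_diamond (v w : Fin n → FreeGroup (Fin n)) :
    alphaHom n (diamond v w) = (alphaHom n v).comp (alphaHom n w) := by
  ext i
  simp only [MonoidHom.comp_apply, alphaHom_of, diamond, map_mul, map_inv, mul_inv_rev]
  group

lemma diamond_assoc (u v w : Fin n → FreeGroup (Fin n)) :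
    diamond (diamond u v) w = diamond u (diamond v w) := by
  funext i
  simp only [diamond, alphaHom_diamond, MonoidHom.comp_apply, map_mul, mul_assoc]

lemma one_diamond (w : Fin n → FreeGroup (Fin n)) : diamond (fun _ => 1) w = w := by
  funext i
  simp [diamond, alphaHom_one]

lemma diamond_one (w : Fin n → FreeGroup (Fin n)) : diamond w (fun _ => 1) = w := by
  funext i
  simp [diamond]

lemma one_mem : (fun _ => (1 : FreeGroup (Fin n))) ∈ Wset n := by
  simp only [Wset, Set.mem_ofPred_eq, alphaHom_one, MonoidHom.id_apply]
  exact ⟨Function.bijective_id, trivial⟩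

lemma diamond_mem {v w : Fin n → FreeGroup (Fin n)} (hv : v ∈ Wset n) (hw : w ∈ Wset n) :
    diamond v w ∈ Wset n := by
  refine ⟨?_, ?_⟩
  · rw [alphaHom_diamond]
    exact hv.1.comp hw.1
  · rw [alphaHom_diamond, MonoidHom.comp_apply, hw.2, hv.2]

section Inverse

variable {w : Fin n → FreeGroup (Fin n)} (hw : Function.Bijective (alphaHom n w))

noncomputable abbrev alphaEquiv : FreeGroup (Fin n) ≃* FreeGroup (Fin n) :=
  MulEquiv.ofBijective _ hw

noncomputable def diamondInv : Fin n → FreeGroup (Fin n) :=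
  fun i => ((alphaEquiv hw).symm (w i))⁻¹

lemma diamond_diamondInv : diamond w (diamondInv hw) = fun _ => 1 := by
  funext i
  have : alphaHom n w ((alphaEquiv hw).symm (w i)) = w i := (alphaEquiv hw).apply_symm_apply _
  simp [diamond, diamondInv, this]

lemma alphaHom_diamondInv : alphaHom n (diamondInv hw) = (alphaEquiv hw).symm.toMonoidHom := by
  refine MonoidHom.ext fun g => hw.1 ?_
  have hcomp := congrArg (fun f => f g) (alphaHom_diamond w (diamondInv hw))
  simp only [diamond_diamondInv, alphaHom_one, MonoidHom.id_apply, MonoidHom.comp_apply] at hcomp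
  rw [← hcomp]
  exact ((alphaEquiv hw).apply_symm_apply g).symm

lemma diamondInv_diamond : diamond (diamondInv hw) w = fun _ => 1 := by
  funext i
  simp [diamond, alphaHom_diamondInv, diamondInv]

lemma diamondInv_mem (hw' : w ∈ Wset n) : diamondInv hw'.1 ∈ Wset n := by
  rw [Wset, Set.mem_ofPred_eq, alphaHom_diamondInv]
  exact ⟨(alphaEquiv hw'.1).symm.bijective,
    (MulEquiv.symm_apply_eq _).mpr hw'.2.symm⟩

end Inverse

end Wset

/-- (i) `⋄` is associative and `α(v ⋄ w) = α(v) ∘ α(w)`; (ii) `W_n` is a group under `⋄`: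
the constant tuple `1` lies in `W_n` and is a two-sided identity, `W_n` is closed under
`⋄`, and every element of `W_n` has a two-sided `⋄`-inverse in `W_n`. -/
theorem Wset_group (n : ℕ) :
    (∀ u v w : Fin n → FreeGroup (Fin n),
      diamond (diamond u v) w = diamond u (diamond v w)) ∧
    (∀ v w : Fin n → FreeGroup (Fin n),
      ∀ g : FreeGroup (Fin n), alphaHom n (diamond v w) g = alphaHom n v (alphaHom n w g)) ∧
    ((fun _ => (1 : FreeGroup (Fin n))) ∈ Wset n) ∧
    (∀ w ∈ Wset n, diamond (fun _ => 1) w = w ∧ diamond w (fun _ => 1) = w) ∧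
    (∀ v ∈ Wset n, ∀ w ∈ Wset n, diamond v w ∈ Wset n) ∧
    (∀ w ∈ Wset n, ∃ v ∈ Wset n,
      diamond v w = (fun _ => 1) ∧ diamond w v = (fun _ => 1)) :=
  ⟨Wset.diamond_assoc,
    fun v w g => by rw [Wset.alphaHom_diamond]; rfl,
    Wset.one_mem,
    fun w _ => ⟨Wset.one_diamond w, Wset.diamond_one w⟩,
    fun _ hv _ hw => Wset.diamond_mem hv hw,
    fun _ hw => ⟨Wset.diamondInv hw.1, Wset.diamondInv_mem hw, Wset.diamondInv_diamond hw.1,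
      Wset.diamond_diamondInv hw.1⟩⟩
end

section
/- Let B and Q be topological spaces and let P be a compact Hausdorff space. Regard B×P and B×Q as fibrewise spaces over B via the first projections, so that the fibre of B×P over b is {b}×P. Then the natural bijection Map_B(B×P, B×Q) → B × C(P,Q), sending a pair (b, f) (with f : {b}×P → {b}×Q continuous) to (b, g) where g(p) is the second coordinate of f(b,p), is a homeomorphism, where C(P,Q) carries the compact-open topology and B × C(P,Q) the product topology. -/
/-- The fibrewise mapping space `Map_B(X,Y)` of a pair of fibrewise spaces
`p : X → B`, `q : Y → B`: pairs `(b, f)` with `f : X_b → Y_b` continuous. -/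
structure FibreMap {B X Y : Type} [TopologicalSpace X] [TopologicalSpace Y]
    (p : X → B) (q : Y → B) where
  base : B
  map : C({x : X // p x = base}, {y : Y // q y = base})

/-- `K` is a fibrewise compact subspace of `X_W` over `W`: the restriction of the
projection to `K` is a closed map `K → W` with compact fibres. -/
def FibrewiseCompactOn {B X : Type} [TopologicalSpace B] [TopologicalSpace X]
    (p : X → B) (K : Set X) (W : Set B) : Prop :=
  ∃ h : ∀ x ∈ K, p x ∈ W,
    IsClosedMap (fun k : K => (⟨p k.1, h k.1 k.2⟩ : W)) ∧
    ∀ b ∈ W, IsCompact (K ∩ p ⁻¹' {b})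

/-- The fibrewise compact-open topology on `Map_B(X,Y)`: generated by the sets
`(K, V; W) = {(b,f) : b ∈ W, f(K_b) ⊆ V_b}`, where `W ⊆ B` is open, `K` is a fibrewise
compact subspace of `X_W`, and `V` is an open subspace of `Y_W`. -/
instance fibreMapTopology {B X Y : Type} [TopologicalSpace B] [TopologicalSpace X]
    [TopologicalSpace Y] (p : X → B) (q : Y → B) :
    TopologicalSpace (FibreMap p q) :=
  TopologicalSpace.generateFrom
    {S | ∃ (W : Set B) (K : Set X) (V : Set Y),
      IsOpen W ∧ FibrewiseCompactOn p K W ∧ IsOpen V ∧ V ⊆ q ⁻¹' W ∧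
      S = {m : FibreMap p q | m.base ∈ W ∧
        ∀ (x : X), x ∈ K → ∀ hx : p x = m.base, ((m.map ⟨x, hx⟩ : Y)) ∈ V}}

/-! `Θ` is forced to be `m ↦ (m.base, t ↦ (m.map (m.base, t)).2)`, whose inverse is evident.
Every subbasic open set of `B × C(P, Q)` pulls back to a subbasic set `(W, ∅, ∅)` or
`(B, B × K, B × U)` of `Map_B`, the latter being fibrewise compact because `B × K → B` is closed for
compact `K`. Conversely, given `(b₀, g₀)` in the pullback of `(W, K, V)`, evaluation
`(B × C(P, Q)) × P → B × Q` is continuous as `P` is locally compact, so the tube lemma gives open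
`O ∋ (b₀, g₀)` and `G ⊇ K_{b₀}` with `O × G` mapped into `V`; fibrewise compactness of `K` makes
`{b ∈ W | K_b ⊆ B × G}` open, and its intersection with `O` is the required neighbourhood. -/

section FibrewiseCompact

variable {B X : Type} [TopologicalSpace B] [TopologicalSpace X]

theorem FibrewiseCompactOn.empty (p : X → B) (W : Set B) : FibrewiseCompactOn p ∅ W :=
  ⟨fun _ hx => hx.elim, fun _ _ => by simp [Set.eq_empty_of_isEmpty], by simp⟩

theorem FibrewiseCompactOn.isOpen_setOf_forall_mem {p : X → B} {K : Set X} {W : Set B}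
    (hK : FibrewiseCompactOn p K W) (hW : IsOpen W) {A : Set X} (hA : IsOpen A) :
    IsOpen {b | b ∈ W ∧ ∀ x ∈ K, p x = b → x ∈ A} := by
  obtain ⟨hKW, hclosed, -⟩ := hK
  have hD := hclosed _ (hA.isClosed_compl.preimage continuous_subtype_val)
  convert hW.isOpenMap_subtype_val _ hD.isOpen_compl using 1
  ext b
  simp only [Set.mem_ofPred_eq, Set.mem_image, Set.mem_compl_iff, Set.mem_preimage,
    Subtype.exists]
  grind

theorem FibrewiseCompactOn.isCompact_preimage_prodMk {P : Type} [TopologicalSpace P]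
    {K : Set (B × P)} {W : Set B} (hK : FibrewiseCompactOn Prod.fst K W) {b : B} (hb : b ∈ W) :
    IsCompact (Prod.mk b ⁻¹' K) := by
  have := (hK.2.2 b hb).image continuous_snd
  convert this using 1
  ext t
  simp

theorem FibrewiseCompactOn.univ_prod {P : Type} [TopologicalSpace P] {K : Set P}
    (hK : IsCompact K) : FibrewiseCompactOn (Prod.fst : B × P → B) (Set.univ ×ˢ K) Set.univ := by
  have : CompactSpace K := isCompact_iff_compactSpace.1 hK
  refine ⟨fun _ _ => trivial, ?_, fun b _ => ?_⟩
  · exact isClosedMap_fst_of_compactSpace.comp (Homeomorph.Set.prod _ _).isClosedMap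
  · convert (isCompact_singleton (x := b)).prod hK using 1
    ext ⟨x, t⟩
    simp [and_comm]

end FibrewiseCompact

namespace FibreMap

section General

variable {B X Y : Type} [TopologicalSpace B] [TopologicalSpace X] [TopologicalSpace Y]
  {p : X → B} {q : Y → B}

theorem isOpen_setOf {W : Set B} {K : Set X} {V : Set Y} (hW : IsOpen W)
    (hK : FibrewiseCompactOn p K W) (hV : IsOpen V) (hVW : V ⊆ q ⁻¹' W) :
    IsOpen {m : FibreMap p q |
      m.base ∈ W ∧ ∀ x ∈ K, ∀ hx : p x = m.base, (m.map ⟨x, hx⟩ : Y) ∈ V} :=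
  TopologicalSpace.isOpen_generateFrom_of_mem ⟨W, K, V, hW, hK, hV, hVW, rfl⟩

theorem continuous_base : Continuous (base : FibreMap p q → B) :=
  continuous_def.2 fun W hW => by
    simpa [Set.preimage] using
      isOpen_setOf hW (FibrewiseCompactOn.empty p W) isOpen_empty (Set.empty_subset _)

end General

variable {B P Q : Type} [TopologicalSpace B] [TopologicalSpace P] [TopologicalSpace Q]

def toProd (m : FibreMap (Prod.fst : B × P → B) (Prod.fst : B × Q → B)) : B × C(P, Q) :=
  (m.base, ⟨fun t => (m.map ⟨(m.base, t), rfl⟩).1.2, by fun_prop⟩)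

def ofProd (z : B × C(P, Q)) : FibreMap (Prod.fst : B × P → B) (Prod.fst : B × Q → B) where
  base := z.1
  map := ⟨fun x => ⟨(z.1, z.2 x.1.2), rfl⟩, by fun_prop⟩

theorem ofProd_toProd (m : FibreMap (Prod.fst : B × P → B) (Prod.fst : B × Q → B)) :
    ofProd (toProd m) = m := by
  obtain ⟨b, f⟩ := m
  show FibreMap.mk b _ = FibreMap.mk b f
  congr 1
  ext ⟨⟨b', t⟩, hb'⟩ : 2
  obtain rfl : b' = b := hb'
  exact Prod.ext (f _).2.symm rfl

theorem continuous_toProd :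
    Continuous (toProd : FibreMap (Prod.fst : B × P → B) (Prod.fst : B × Q → B) → B × C(P, Q)) := by
  refine continuous_base.prodMk (ContinuousMap.continuous_compactOpen.2 fun K hK U hU => ?_)
  convert isOpen_setOf isOpen_univ (FibrewiseCompactOn.univ_prod hK) (isOpen_univ.prod hU)
    (Set.subset_univ _) using 1
  ext m
  simp only [Set.MapsTo, ContinuousMap.coe_mk, Set.mem_ofPred_eq, Set.mem_univ, Set.mem_prod,
    true_and, Prod.forall]
  exact ⟨fun h b t ht hb => by subst hb; exact h ht, fun h t ht => h _ t ht rfl⟩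

theorem continuous_ofProd [LocallyCompactSpace P] :
    Continuous (ofProd : B × C(P, Q) → FibreMap (Prod.fst : B × P → B) (Prod.fst : B × Q → B)) := by
  refine continuous_generateFrom_iff.mpr ?_
  rintro _ ⟨W, K, V, hW, hK, hV, -, rfl⟩
  rw [isOpen_iff_forall_mem_open]
  rintro ⟨b₀, g₀⟩ ⟨hb₀ : b₀ ∈ W, hg₀⟩
  have hev : IsOpen {z : (B × C(P, Q)) × P | (z.1.1, z.1.2 z.2) ∈ V} :=
    hV.preimage (by fun_prop)
  obtain ⟨O, G, hO, hG, hzO, hKG, hOG⟩ :=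
    generalized_tube_lemma (isCompact_singleton (x := (b₀, g₀)))
      (hK.isCompact_preimage_prodMk hb₀) hev (by rintro ⟨z, t⟩ ⟨rfl, ht⟩; exact hg₀ _ ht rfl)
  have hGW : IsOpen {b | b ∈ W ∧ ∀ x ∈ K, x.1 = b → x ∈ Prod.snd ⁻¹' G} :=
    hK.isOpen_setOf_forall_mem hW (hG.preimage continuous_snd)
  refine ⟨O ∩ Prod.fst ⁻¹' _, ?_, hO.inter (hGW.preimage continuous_fst), ?_⟩
  · rintro ⟨b, g⟩ ⟨hbg, hbW, hKbG⟩
    refine ⟨hbW, ?_⟩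
    rintro ⟨b', t⟩ hx (rfl : b' = b)
    exact hOG (a := ((b', g), t)) ⟨hbg, hKbG _ hx rfl⟩
  · refine ⟨hzO rfl, hb₀, ?_⟩
    rintro ⟨b, t⟩ hx (rfl : b = b₀)
    exact hKG hx

def prodHomeomorph [LocallyCompactSpace P] :
    FibreMap (Prod.fst : B × P → B) (Prod.fst : B × Q → B) ≃ₜ B × C(P, Q) where
  toFun := toProd
  invFun := ofProd
  left_inv := ofProd_toProd
  right_inv _ := rfl
  continuous_toFun := continuous_toProd
  continuous_invFun := continuous_ofProd

end FibreMap

/-- For trivial fibrewise spaces `B × P` and `B × Q` with `P` compact Hausdorff, the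
natural bijection `Map_B(B×P, B×Q) → B × C(P,Q)` is a homeomorphism (with `C(P,Q)`
carrying the compact-open topology). -/
theorem fibreMap_trivial_isHomeomorph
    {B P Q : Type} [TopologicalSpace B] [TopologicalSpace P] [TopologicalSpace Q]
    [CompactSpace P] [T2Space P]
    (Θ : FibreMap (Prod.fst : B × P → B) (Prod.fst : B × Q → B) → B × C(P, Q))
    (hΘbase : ∀ m, (Θ m).1 = m.base)
    (hΘmap : ∀ m (t : P), (Θ m).2 t = (m.map ⟨(m.base, t), rfl⟩).1.2) :
    IsHomeomorph Θ := by
  have hΘ : Θ = FibreMap.prodHomeomorph :=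
    funext fun m => Prod.ext (hΘbase m) (ContinuousMap.ext (hΘmap m))
  exact hΘ ▸ FibreMap.prodHomeomorph.isHomeomorph
end

section
/- Let A be a compact Hausdorff space, X a Hausdorff topological space, and e : A×[0,1) → X an open embedding (a homeomorphism onto an open subset of X). Define f : A → X by f(a) = e(a,0). Then for every topological space K the map f × id_K : A×K → X×K has the homotopy extension property; in particular (taking K a one-point space) f is a cofibration. -/
/-!
The half collar `e(A × [0, 1/2])` is compact, hence closed in `X`, and contains the open set
`e(A × [0, 1/2))`. Over the half collar the homotopy is extended by retracting the square
`[0, 1/2] × [0, 1]` onto its left and bottom edges, sending the right edge to the bottom corner;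
off `e(A × [0, 1/2))` the extension is the constant homotopy at `g`. The two pieces agree on
`e(A × {1/2})`, so they paste along closed sets.
-/

open unitInterval

open Set Function Topology

theorem Function.extend_eq_of_forall {α β γ : Type*} {f : α → β} {g : α → γ} {e' : β → γ}
    {b : β} (h : ∀ a, f a = b → g a = e' b) : extend f g e' b = e' b := by
  classical
  rw [extend_def]
  split_ifs with hb
  · exact h _ hb.choose_spec
  · rfl

theorem Topology.IsClosedEmbedding.continuous_extend {C X Z : Type*} [TopologicalSpace C]
    [TopologicalSpace X] [TopologicalSpace Z] {j : C → X} (hj : IsClosedEmbedding j)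
    {D : Set X} (hD : IsClosed D) (hcover : range j ∪ D = univ) {F : C → Z} (hF : Continuous F)
    {g : X → Z} (hg : ContinuousOn g D) (hFg : ∀ c, j c ∈ D → F c = g (j c)) :
    Continuous (extend j F g) := by
  have hrange : ContinuousOn (extend j F g) (range j) := by
    rw [← image_univ, hj.isInducing.continuousOn_image_iff, extend_comp hj.injective]
    exact hF.continuousOn
  have hDcont : ContinuousOn (extend j F g) D :=
    hg.congr fun x hx => extend_eq_of_forall fun c hc => hc ▸ hFg c (hc ▸ hx)
  rw [← continuousOn_univ, ← hcover]
  exact hrange.union_of_isClosed hDcont hj.isClosed_range hD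

theorem exists_homotopy_rel_right_edge {Y Z : Type*} [TopologicalSpace Y] [TopologicalSpace Z]
    {h : Y × I → Z} (hh : Continuous h) {G : Y × I → Z} (hG : Continuous G)
    (hG0 : ∀ y, G (y, 0) = h (y, 0)) :
    ∃ H : (Y × I) × I → Z, Continuous H ∧ (∀ p, H (p, 0) = h p) ∧
      (∀ y t, H ((y, 0), t) = G (y, t)) ∧ ∀ y t, H ((y, 1), t) = h (y, 1) := by
  -- `(s, t) ↦ (max w 0, max (-w) 0)` with `w = s (1 + t) - t` retracts the square onto its
  -- left and bottom edges and sends the right edge to the corner `(1, 0)`.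
  refine ⟨fun p => if (p.1.2 : ℝ) * (1 + p.2) - p.2 ≤ 0
      then G (p.1.1, projIcc 0 1 zero_le_one (-((p.1.2 : ℝ) * (1 + p.2) - p.2)))
      else h (p.1.1, projIcc 0 1 zero_le_one ((p.1.2 : ℝ) * (1 + p.2) - p.2)), ?_, ?_, ?_, ?_⟩
  · refine Continuous.if_le (hG.comp (by fun_prop)) (hh.comp (by fun_prop)) (by fun_prop)
      continuous_const fun p hp => ?_
    simp only [hp, neg_zero, projIcc_left]
    exact hG0 _
  · rintro ⟨y, s⟩
    simp only [Icc.coe_zero, add_zero, mul_one, sub_zero]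
    split_ifs with hs
    · obtain rfl : s = 0 := le_antisymm hs s.2.1
      simp only [Icc.coe_zero, neg_zero, projIcc_left]
      exact hG0 y
    · rw [projIcc_val]
  · intro y t
    simp only [Icc.coe_zero, zero_mul, zero_sub, neg_neg, projIcc_val]
    rw [if_pos (neg_nonpos.2 t.2.1)]
  · intro y t
    simp only [Icc.coe_one, one_mul, add_sub_cancel_right, projIcc_right]
    rw [if_neg one_pos.not_ge]
    rfl

section collar

variable {A X : Type}

noncomputable def halfCollar (e : A × Ico (0 : ℝ) 1 → X) (p : A × I) : X :=
  e (p.1, ⟨p.2 / 2, by have := p.2.2.1; positivity, by linarith [p.2.2.2]⟩)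

variable {e : A × Ico (0 : ℝ) 1 → X}

theorem injective_halfCollar (he : Injective e) : Injective (halfCollar e) := by
  rintro ⟨a, s⟩ ⟨b, t⟩ hst
  obtain ⟨rfl, hst⟩ := Prod.ext_iff.1 (he hst)
  have : (s : ℝ) / 2 = t / 2 := congrArg Subtype.val hst
  exact Prod.ext rfl (Subtype.ext (by linarith))

theorem halfCollar_zero (a : A) : halfCollar e (a, 0) = e (a, ⟨0, le_refl 0, one_pos⟩) := by
  simp only [halfCollar, Icc.coe_zero, zero_div]

variable [TopologicalSpace A] [TopologicalSpace X]

theorem continuous_halfCollar (he : Continuous e) : Continuous (halfCollar e) :=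
  he.comp (by fun_prop)

theorem exists_isOpen_subset_range_halfCollar (he : IsOpenMap e) :
    ∃ O : Set X, IsOpen O ∧ O ⊆ range (halfCollar e) ∧
      ∀ a (s : I), s < 1 → halfCollar e (a, s) ∈ O := by
  refine ⟨e '' {p | (p.2 : ℝ) < 1 / 2}, he _ (isOpen_lt (by fun_prop) continuous_const), ?_, ?_⟩
  · rintro _ ⟨⟨a, u⟩, hu, rfl⟩
    refine ⟨(a, ⟨2 * u, by linarith [u.2.1], by linarith [hu.out]⟩), ?_⟩
    simp [halfCollar]
  · intro a s hs
    exact ⟨_, show (s : ℝ) / 2 < 1 / 2 by linarith [show (s : ℝ) < 1 from hs], rfl⟩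

theorem hep_prodMap_id_of_collar [CompactSpace A] [T2Space X] (he : IsOpenEmbedding e)
    {f : A → X} (hf : ∀ a, f a = e (a, ⟨0, le_refl 0, one_pos⟩)) (K : Type)
    [TopologicalSpace K] : HEP (fun w : A × K => (f w.1, w.2)) := by
  intro Z _ g hg G hG hG0
  have hcont := continuous_halfCollar he.continuous
  obtain ⟨H, hHc, hH0, hHleft, hHright⟩ := exists_homotopy_rel_right_edge
    (h := fun p : (A × K) × I => g (halfCollar e (p.1.1, p.2), p.1.2))
    (hg.comp (by fun_prop)) hG fun w => (hG0 w).trans <| by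
      change g (f w.1, w.2) = g (halfCollar e (w.1, 0), w.2)
      rw [hf, halfCollar_zero]
  obtain ⟨O, hO, hOrange, hmemO⟩ := exists_isOpen_subset_range_halfCollar he.isOpenMap
  have hcollar : IsClosedEmbedding (halfCollar e) :=
    hcont.isClosedEmbedding (injective_halfCollar he.injective)
  let j : ((A × I) × K) × I → (X × K) × I := Prod.map (Prod.map (halfCollar e) id) id
  have hj : IsClosedEmbedding j := (hcollar.prodMap .id).prodMap .id
  let F : ((A × I) × K) × I → Z := fun c => H (((c.1.1.1, c.1.2), c.1.1.2), c.2)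
  refine ⟨extend j F (fun p => g p.1), hj.continuous_extend
    (hO.preimage (by fun_prop : Continuous fun p : (X × K) × I => p.1.1)).isClosed_compl
    ?_ (hHc.comp (by fun_prop)) (hg.comp continuous_fst).continuousOn ?_, ?_, ?_⟩
  · refine eq_univ_of_forall fun p => ?_
    by_cases hp : p.1.1 ∈ O
    · obtain ⟨c, hc⟩ := hOrange hp
      exact Or.inl ⟨((c, p.1.2), p.2), by simp [j, hc]⟩
    · exact Or.inr hp
  · rintro ⟨⟨⟨a, s⟩, k⟩, t⟩ hs
    obtain rfl : s = 1 := le_antisymm s.2.2 (not_lt.1 fun hs1 => hs (hmemO a s hs1))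
    exact hHright (a, k) t
  · rintro ⟨x, k⟩
    refine extend_eq_of_forall ?_
    rintro ⟨⟨⟨a, s⟩, k'⟩, t⟩ hc
    simp only [j, Prod.map_apply, id_eq, Prod.mk.injEq] at hc
    obtain ⟨⟨rfl, rfl⟩, rfl⟩ := hc
    exact hH0 _
  · intro w t
    change extend j F _ ((f w.1, w.2), t) = _
    rw [hf, ← halfCollar_zero (e := e)]
    exact (hj.injective.extend_apply F _ (((w.1, 0), w.2), t)).trans (hHleft _ _)

end collar

theorem HEP.of_prod_unit {A X : Type} [TopologicalSpace A] [TopologicalSpace X] {f : A → X}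
    (h : HEP (fun w : A × Unit => (f w.1, w.2))) : HEP f := by
  intro Z _ g hg G hG hG0
  obtain ⟨G', hG'c, hG'0, hG'ext⟩ := h Z _ (fun p => g p.1) (hg.comp continuous_fst)
    (fun p => G (p.1.1, p.2)) (hG.comp (by fun_prop)) fun w => hG0 w.1
  exact ⟨fun p => G' ((p.1, ()), p.2), hG'c.comp (by fun_prop), fun x => hG'0 (x, ()),
    fun a t => hG'ext (a, ()) t⟩

theorem hep_of_collar_general
    {A X : Type} [TopologicalSpace A] [TopologicalSpace X]
    [CompactSpace A] [T2Space X]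
    (e : A × ↥(Set.Ico (0 : ℝ) 1) → X) (he : Topology.IsOpenEmbedding e)
    (f : A → X) (hf : ∀ a, f a = e (a, ⟨0, le_refl 0, one_pos⟩)) :
    (∀ (K : Type) (_ : TopologicalSpace K), HEP (fun w : A × K => (f w.1, w.2))) ∧
      HEP f :=
  ⟨fun K _ => hep_prodMap_id_of_collar he hf K, (hep_prodMap_id_of_collar he hf Unit).of_prod_unit⟩

/-- If `A` is compact Hausdorff, `X` is Hausdorff and `e : A × [0,1) → X` is an open
embedding, then `f := e(·, 0) : A → X` is such that `f × id_K : A × K → X × K` has the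
homotopy extension property for every space `K`; in particular `f` is a cofibration. -/
theorem hep_of_collar
    {A X : Type} [TopologicalSpace A] [TopologicalSpace X]
    [CompactSpace A] [T2Space A] [T2Space X]
    (e : A × ↥(Set.Ico (0 : ℝ) 1) → X) (he : Topology.IsOpenEmbedding e)
    (f : A → X) (hf : ∀ a, f a = e (a, ⟨0, le_refl 0, one_pos⟩)) :
    (∀ (K : Type) (_ : TopologicalSpace K), HEP (fun w : A × K => (f w.1, w.2))) ∧
      HEP f :=
  hep_of_collar_general e he f hf
end
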